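/- arXiv:1407.1590 — 4 statements merged into one kernel-verified Lean document; each statement's English description precedes it below -/
import Mathlib

section
/- Let (A, m) be a Cohen-Macaulay local ring, I an m-primary ideal with minimal reduction Q such that I is good (i.e., I² = QI and Q : I = I). If I' is an ideal containing I and integral over I such that I'² = QI', then I = I'. -/
open IsLocalRing

/-- An element `x` of `A` is integral over the ideal `I`: it satisfies an equation
`x^n + c₁ x^(n-1) + ⋯ + c_n = 0` with `cᵢ ∈ Iⁱ`. -/
def IsIntegralOverIdeal {A : Type*} [CommRing A] (I : Ideal A) (x : A) : Prop :=
  ∃ (n : ℕ) (c : ℕ → A), 0 < n ∧ (∀ i ∈ Finset.Icc 1 n, c i ∈ I ^ i) ∧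
    x ^ n + ∑ i ∈ Finset.Icc 1 n, c i * x ^ (n - i) = 0

/-- An ideal is integrally closed if it contains every element integral over it. -/
def Ideal.IsIntegrallyClosedIdeal {A : Type*} [CommRing A] (I : Ideal A) : Prop :=
  ∀ x, IsIntegralOverIdeal I x → x ∈ I

/-- `Q` is a reduction of `I`: `Q ⊆ I` and `I^(r+1) = Q I^r` for some `r`. -/
def IsReductionOf {A : Type*} [CommRing A] (Q I : Ideal A) : Prop :=
  Q ≤ I ∧ ∃ r : ℕ, I ^ (r + 1) = Q * I ^ r

/-- A minimal reduction of an `m`-primary ideal in a local ring: a reduction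
generated by `dim A` elements (a parameter ideal). -/
def IsMinimalReductionOf {A : Type*} [CommRing A] (Q I : Ideal A) : Prop :=
  IsReductionOf Q I ∧
    ∃ s : Finset A, Ideal.span (s : Set A) = Q ∧ (s.card : WithBot ℕ∞) = ringKrullDim A

/-- In a two-dimensional local ring, a minimal reduction is a two-generated
(parameter) reduction. -/
def IsMinimalReduction2 {A : Type*} [CommRing A] (Q I : Ideal A) : Prop :=
  IsReductionOf Q I ∧ ∃ f g : A, Q = Ideal.span {f, g}

/-- The length of an `A`-module, i.e. the Krull dimension of its lattice of submodules. -/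
noncomputable def moduleLength (A M : Type*) [CommRing A] [AddCommGroup M] [Module A M] :
    WithBot ℕ∞ :=
  Order.krullDim (Submodule A M)

/-- The minimal number of generators of an ideal. -/
noncomputable def mu {A : Type*} [CommRing A] (I : Ideal A) : ℕ :=
  sInf {n : ℕ | ∃ s : Finset A, s.card = n ∧ Ideal.span (s : Set A) = I}

/-- A Noetherian local ring is Cohen–Macaulay iff some system of parameters
is a regular sequence. -/
def IsCohenMacaulayLocalRing (A : Type*) [CommRing A] [IsLocalRing A] : Prop :=
  ∃ rs : List A, (∀ r ∈ rs, r ∈ maximalIdeal A) ∧ RingTheory.Sequence.IsRegular A rs ∧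
    (rs.length : WithBot ℕ∞) = ringKrullDim A

/-- A Noetherian local ring is Gorenstein iff it is Cohen–Macaulay and some
(equivalently, every) parameter ideal is irreducible. -/
def IsGorensteinLocalRing (A : Type*) [CommRing A] [IsLocalRing A] : Prop :=
  ∃ rs : List A, (∀ r ∈ rs, r ∈ maximalIdeal A) ∧ RingTheory.Sequence.IsRegular A rs ∧
    (rs.length : WithBot ℕ∞) = ringKrullDim A ∧ InfIrred (Ideal.ofList rs)

/-- `I` has Hilbert–Samuel multiplicity `e` with respect to dimension `d`:
`ℓ_A(A/I^{n+1})` agrees for large `n` with a polynomial with leading term `(e/d!) n^d`. -/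
def HasHSMultiplicity {A : Type*} [CommRing A] (I : Ideal A) (d e : ℕ) : Prop :=
  ∃ p : Polynomial ℚ, p.natDegree ≤ d ∧ p.coeff d * (Nat.factorial d : ℚ) = (e : ℚ) ∧
    ∀ᶠ n : ℕ in Filter.atTop, ∃ l : ℕ,
      moduleLength A (A ⧸ I ^ (n + 1)) = (l : WithBot ℕ∞) ∧
        (l : ℚ) = Polynomial.eval (n : ℚ) p

set_option maxHeartbeats 2000000 in
/-- Let `(A, m)` be a Cohen–Macaulay local ring, `I` an `m`-primary
ideal with minimal reduction `Q` such that `I` is good (`I² = QI` and `Q : I = I`).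
If `I'` is an ideal containing `I` and integral over `I` with `I'² = QI'`, then `I = I'`. -/
theorem statement0 {A : Type*} [CommRing A] [IsLocalRing A] [IsNoetherianRing A]
    (hCM : IsCohenMacaulayLocalRing A)
    (I Q : Ideal A) (hprim : I.radical = maximalIdeal A)
    (hQ : IsMinimalReductionOf Q I)
    (hstable : I ^ 2 = Q * I) (hgood : Q.colon I = I)
    (I' : Ideal A) (hle : I ≤ I') (hint : ∀ x ∈ I', IsIntegralOverIdeal I x)
    (hstable' : I' ^ 2 = Q * I') :
    I = I' := by
  refine le_antisymm hle fun x hx => ?_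
  have hx' : x ∈ Q.colon I := by
    refine Submodule.mem_colon.mpr fun i hi => ?_
    have h2 : x * i ∈ I' ^ 2 := by
      rw [sq]
      exact Ideal.mul_mem_mul hx (hle hi)
    rw [hstable'] at h2
    rw [smul_eq_mul]
    exact Ideal.mul_le_left (I := Q) (J := I') h2
  rwa [hgood] at hx'
end

section
/- Let (A, m) be a two-dimensional normal local ring in which every integrally closed m-primary ideal J satisfies J² = QJ for every minimal reduction Q of J (e.g., a rational singularity). Then every good m-primary ideal of A is integrally closed. -/
open IsLocalRing

section AuxLemmas
variable {A : Type*} [CommRing A]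

lemma intOver_mono {I J : Ideal A} (h : I ≤ J) {x : A} (hx : IsIntegralOverIdeal I x) :
    IsIntegralOverIdeal J x := by
  obtain ⟨n, c, hn, hc, he⟩ := hx
  exact ⟨n, c, hn, fun i hi => Ideal.pow_right_mono h i (hc i hi), he⟩

lemma xn_mem (J : Ideal A) (x : A) {n : ℕ} {c : ℕ → A} (hn : 0 < n)
    (hc : ∀ i ∈ Finset.Icc 1 n, c i ∈ J ^ i)
    (he : x ^ n + ∑ i ∈ Finset.Icc 1 n, c i * x ^ (n - i) = 0) :
    x ^ n ∈ J * (J + Ideal.span {x}) ^ (n - 1) := by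
  have hx : x ∈ J + Ideal.span {x} :=
    Submodule.mem_sup_right (Ideal.mem_span_singleton_self x)
  have hxn : x ^ n = -∑ i ∈ Finset.Icc 1 n, c i * x ^ (n - i) := by linear_combination he
  rw [hxn]
  refine neg_mem (Ideal.sum_mem _ fun i hi => ?_)
  obtain ⟨hi1, hin⟩ := Finset.mem_Icc.mp hi
  have h1 : c i ∈ J * J ^ (i - 1) := by
    have h := hc i hi
    have hpow : J ^ i = J * J ^ (i - 1) := by
      conv_lhs => rw [show i = (i - 1) + 1 by omega]
      rw [pow_succ']
    rwa [hpow] at h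
  have h2 : x ^ (n - i) ∈ (J + Ideal.span {x}) ^ (n - i) := Ideal.pow_mem_pow hx _
  have h3 := Ideal.mul_mem_mul h1 h2
  have hle : J * J ^ (i - 1) * (J + Ideal.span {x}) ^ (n - i) ≤
      J * (J + Ideal.span {x}) ^ (n - 1) := by
    rw [mul_assoc]
    refine Ideal.mul_mono le_rfl ?_
    calc J ^ (i - 1) * (J + Ideal.span {x}) ^ (n - i)
        ≤ (J + Ideal.span {x}) ^ (i - 1) * (J + Ideal.span {x}) ^ (n - i) :=
          Ideal.mul_mono (Ideal.pow_right_mono le_sup_left _) le_rfl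
      _ = (J + Ideal.span {x}) ^ (n - 1) := by
          rw [← pow_add]; congr 1; omega
  exact hle h3

lemma aux_pow (J : Ideal A) (x : A) (k : ℕ) :
    Ideal.span {x} * (J + Ideal.span {x}) ^ k ≤
      J * (J + Ideal.span {x}) ^ k + Ideal.span {x ^ (k + 1)} := by
  induction k with
  | zero => simp
  | succ k ih =>
    have hxk : Ideal.span {x ^ (k + 1)} ≤ (J + Ideal.span {x}) ^ (k + 1) := by
      rw [Ideal.span_singleton_le_iff_mem]
      exact Ideal.pow_mem_pow (Submodule.mem_sup_right (Ideal.mem_span_singleton_self x)) _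
    calc Ideal.span {x} * (J + Ideal.span {x}) ^ (k + 1)
        = (Ideal.span {x} * (J + Ideal.span {x}) ^ k) * (J + Ideal.span {x}) := by
          rw [pow_succ, mul_assoc]
      _ ≤ (J * (J + Ideal.span {x}) ^ k + Ideal.span {x ^ (k + 1)}) * (J + Ideal.span {x}) :=
          Ideal.mul_mono ih le_rfl
      _ = J * (J + Ideal.span {x}) ^ (k + 1) +
            (Ideal.span {x ^ (k + 1)} * J + Ideal.span {x ^ (k + 1)} * Ideal.span {x}) := by
          rw [add_mul, mul_assoc, ← pow_succ, mul_add]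
      _ ≤ J * (J + Ideal.span {x}) ^ (k + 1) + Ideal.span {x ^ (k + 1 + 1)} := by
          refine sup_le le_sup_left (sup_le ?_ ?_)
          · calc Ideal.span {x ^ (k + 1)} * J = J * Ideal.span {x ^ (k + 1)} := mul_comm _ _
              _ ≤ J * (J + Ideal.span {x}) ^ (k + 1) := Ideal.mul_mono le_rfl hxk
              _ ≤ _ := le_sup_left
          · rw [Ideal.span_singleton_mul_span_singleton, ← pow_succ]
            exact le_sup_right

lemma red_step (J : Ideal A) (x : A) (h : IsIntegralOverIdeal J x) :
    ∃ r, (J + Ideal.span {x}) ^ (r + 1) = J * (J + Ideal.span {x}) ^ r := by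
  obtain ⟨n, c, hn, hc, he⟩ := h
  refine ⟨n - 1, ?_⟩
  have hn1 : n - 1 + 1 = n := by omega
  apply le_antisymm
  · rw [hn1]
    conv_lhs => rw [show n = (n - 1) + 1 by omega, pow_succ']
    rw [add_mul]
    refine sup_le le_rfl ?_
    refine (aux_pow J x (n - 1)).trans (sup_le le_rfl ?_)
    rw [hn1, Ideal.span_singleton_le_iff_mem]
    exact xn_mem J x hn hc he
  · rw [hn1]
    calc J * (J + Ideal.span {x}) ^ (n - 1)
        ≤ (J + Ideal.span {x}) * (J + Ideal.span {x}) ^ (n - 1) :=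
          Ideal.mul_mono le_sup_left le_rfl
      _ = (J + Ideal.span {x}) ^ n := by rw [← pow_succ', hn1]

lemma red_trans {I J L : Ideal A} {a b : ℕ} (h1 : J ^ (a + 1) = I * J ^ a)
    (h2 : L ^ (b + 1) = J * L ^ b) : L ^ (a + b + 1) = I * L ^ (a + b) := by
  have key : ∀ k, L ^ (b + k) = J ^ k * L ^ b := by
    intro k
    induction k with
    | zero => simp
    | succ k ih =>
      calc L ^ (b + (k + 1)) = L ^ (b + k) * L := by rw [← pow_succ, Nat.add_assoc]
        _ = (J ^ k * L ^ b) * L := by rw [ih]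
        _ = J ^ k * (L ^ b * L) := by rw [mul_assoc]
        _ = J ^ k * L ^ (b + 1) := by rw [← pow_succ]
        _ = J ^ k * (J * L ^ b) := by rw [h2]
        _ = J ^ (k + 1) * L ^ b := by rw [← mul_assoc, ← pow_succ]
  calc L ^ (a + b + 1) = L ^ (b + (a + 1)) := by congr 1; omega
    _ = J ^ (a + 1) * L ^ b := key _
    _ = (I * J ^ a) * L ^ b := by rw [h1]
    _ = I * (J ^ a * L ^ b) := by rw [mul_assoc]
    _ = I * L ^ (b + a) := by rw [← key a]
    _ = I * L ^ (a + b) := by rw [Nat.add_comm b a]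

lemma colon_integral [IsNoetherianRing A] [IsDomain A] (I M : Ideal A) (hM : M ≠ ⊥) (x : A)
    (hx : ∀ m ∈ M, x * m ∈ I * M) : IsIntegralOverIdeal I x := by
  haveI : Module.Finite A ↥M := Module.Finite.iff_fg.mpr (IsNoetherian.noetherian M)
  set f : Module.End A ↥M := algebraMap A (Module.End A ↥M) x with hf
  have hrange : LinearMap.range f ≤ I • (⊤ : Submodule A ↥M) := by
    rintro _ ⟨m, rfl⟩
    rw [Submodule.mem_smul_top_iff, Ideal.smul_eq_mul]
    have hfm : ((f m : ↥M) : A) = x * (m : A) := by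
      rw [hf, Module.algebraMap_end_apply]
      simp [smul_eq_mul]
    rw [hfm]
    exact hx m m.2
  obtain ⟨p, hmonic, -, hcoeff, haeval⟩ :=
    LinearMap.exists_monic_and_coeff_mem_pow_and_aeval_eq_zero_of_range_le_smul A f I hrange
  obtain ⟨z, hzM, hz0⟩ := Submodule.ne_bot_iff M |>.mp hM
  have hev : Polynomial.eval x p = 0 := by
    have h0 : algebraMap A (Module.End A ↥M) (Polynomial.eval x p) = 0 := by
      rw [← Polynomial.aeval_algebraMap_apply_eq_algebraMap_eval, ← hf]
      exact haeval
    have h1 : Polynomial.eval x p * z = 0 := by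
      have := congrArg (fun g : Module.End A ↥M => ((g ⟨z, hzM⟩ : ↥M) : A)) h0
      simpa [Module.algebraMap_end_apply, smul_eq_mul] using this
    exact (mul_eq_zero.mp h1).resolve_right hz0
  set n := p.natDegree with hn'
  have hn : 0 < n := by
    rcases Nat.eq_zero_or_pos n with h | h
    · exfalso
      have : p = 1 := hmonic.natDegree_eq_zero.mp h
      rw [this] at hev
      simp at hev
    · exact h
  refine ⟨n, fun i => p.coeff (n - i), hn, ?_, ?_⟩
  · intro i hi
    obtain ⟨h1, h2⟩ := Finset.mem_Icc.mp hi
    have := hcoeff (n - i)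
    rwa [show n - (n - i) = i by omega] at this
  · have hsum : ∑ i ∈ Finset.Icc 1 n, p.coeff (n - i) * x ^ (n - i) =
        ∑ i ∈ Finset.range n, p.coeff i * x ^ i := by
      refine Finset.sum_nbij' (fun k => n - k) (fun k => n - k) ?_ ?_ ?_ ?_ ?_
      · intro a ha
        obtain ⟨h1, h2⟩ := Finset.mem_Icc.mp ha
        exact Finset.mem_range.mpr (by omega)
      · intro a ha
        have := Finset.mem_range.mp ha
        exact Finset.mem_Icc.mpr (by omega)
      · intro a ha
        obtain ⟨h1, h2⟩ := Finset.mem_Icc.mp ha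
        omega
      · intro a ha
        have := Finset.mem_range.mp ha
        omega
      · intro a ha; rfl
    rw [hsum]
    have heval := Polynomial.eval_eq_sum_range (p := p) x
    rw [Finset.sum_range_succ, ← hn', hmonic.coeff_natDegree, one_mul] at heval
    rw [hev] at heval
    linear_combination -heval

end AuxLemmas

/-- Let `(A, m)` be a two-dimensional normal local ring in which
every integrally closed `m`-primary ideal `J` satisfies `J² = QJ` for every minimal
reduction `Q` of `J` (e.g. a rational singularity). Then every good `m`-primary
ideal of `A` is integrally closed. -/
theorem statement1 {A : Type*} [CommRing A] [IsLocalRing A] [IsNoetherianRing A]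
    [IsDomain A] [IsIntegrallyClosed A] (hdim : ringKrullDim A = 2)
    (hstab : ∀ J Q : Ideal A, J.radical = maximalIdeal A → J.IsIntegrallyClosedIdeal →
      IsMinimalReduction2 Q J → J ^ 2 = Q * J)
    (I : Ideal A) (hprim : I.radical = maximalIdeal A)
    (hgood : ∃ Q : Ideal A, IsMinimalReduction2 Q I ∧ I ^ 2 = Q * I ∧ Q.colon I = I) :
    I.IsIntegrallyClosedIdeal := by
  intro x hx
  classical
  by_cases hIbot : I = ⊥
  · subst hIbot
    obtain ⟨n, c, hn, hc, he⟩ := hx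
    have hc0 : ∀ i ∈ Finset.Icc 1 n, c i * x ^ (n - i) = 0 := by
      intro i hi
      obtain ⟨h1, h2⟩ := Finset.mem_Icc.mp hi
      have := hc i hi
      rw [← Ideal.zero_eq_bot, zero_pow (by omega : i ≠ 0)] at this
      rw [Ideal.zero_eq_bot, Ideal.mem_bot] at this
      rw [this, zero_mul]
    rw [Finset.sum_congr rfl hc0, Finset.sum_const_zero, add_zero] at he
    have : x = 0 := pow_eq_zero_iff (by omega : n ≠ 0) |>.mp he
    rw [this]
    exact zero_mem _
  obtain ⟨Q, hQmin, hQI, hQcolon⟩ := hgood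
  obtain ⟨⟨hQle, -⟩, f, g, hQspan⟩ := hQmin
  -- the family of "test colon ideals" and a maximal member
  set S : Set (Ideal A) := {K | ∃ M : Ideal A, M ≠ ⊥ ∧ K = (I * M).colon M} with hS
  have hSne : S.Nonempty := ⟨(I * ⊤).colon ⊤, ⊤, by simp, rfl⟩
  obtain ⟨J, hJS, hmax⟩ :=
    (set_has_maximal_iff_noetherian.mpr (inferInstance : IsNoetherian A A)) S hSne
  obtain ⟨M₀, hM₀, hJdef⟩ := hJS
  have hmem : ∀ y : A, y ∈ J ↔ ∀ m ∈ M₀, y * m ∈ I * M₀ := by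
    intro y
    rw [hJdef]
    constructor
    · intro h m hm
      have := Submodule.mem_colon.mp h m hm
      rwa [smul_eq_mul] at this
    · intro h
      exact Submodule.mem_colon.mpr fun m hm => by rw [smul_eq_mul]; exact h m hm
  have mulne : ∀ {P N : Ideal A}, P ≠ ⊥ → N ≠ ⊥ → P * N ≠ ⊥ := by
    intro P N hP hN h
    rcases Ideal.mul_eq_bot.mp h with h | h
    · exact hP h
    · exact hN h
  -- the closure property of J
  have hclose : ∀ (N : Ideal A), N ≠ ⊥ → ∀ y : A, (∀ m ∈ N, y * m ∈ I * N) → y ∈ J := by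
    intro N hN y hy
    have hJ' : J ≤ (I * (M₀ * N)).colon (M₀ * N) := by
      intro z hz
      refine Submodule.mem_colon.mpr fun p hp => ?_
      rw [smul_eq_mul]
      refine Submodule.mul_induction_on hp (fun m hm nn hn => ?_) (fun p q hp' hq' => ?_)
      · have h1 : z * m ∈ I * M₀ := (hmem z).mp hz m hm
        have := Ideal.mul_mem_mul h1 hn
        rw [mul_assoc] at this
        rwa [show z * m * nn = z * (m * nn) by ring] at this
      · rw [mul_add]; exact add_mem hp' hq'
    have hSmem : (I * (M₀ * N)).colon (M₀ * N) ∈ S := ⟨M₀ * N, mulne hM₀ hN, rfl⟩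
    have heq : (I * (M₀ * N)).colon (M₀ * N) = J := by
      by_contra hne
      exact hmax _ hSmem (lt_of_le_of_ne hJ' (Ne.symm hne))
    rw [← heq]
    refine Submodule.mem_colon.mpr fun p hp => ?_
    rw [smul_eq_mul]
    refine Submodule.mul_induction_on hp (fun m hm nn hn => ?_) (fun p q hp' hq' => ?_)
    · have h1 : y * nn ∈ I * N := hy nn hn
      have h2 := Ideal.mul_mem_mul hm h1
      have h3 : M₀ * (I * N) ≤ I * (M₀ * N) := by
        rw [← mul_assoc, mul_comm M₀ I, mul_assoc]
      rw [show y * (m * nn) = m * (y * nn) by ring]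
      exact h3 h2
    · rw [mul_add]; exact add_mem hp' hq'
  have hIJ : I ≤ J := fun y hy => (hmem y).mpr fun m hm => Ideal.mul_mem_mul hy hm
  -- a nonzero element of I
  obtain ⟨z, hzI, hz0⟩ := (Submodule.ne_bot_iff I).mp hIbot
  have hpow_ne : ∀ (K : Ideal A), I ≤ K → ∀ k : ℕ, K ^ k ≠ ⊥ := by
    intro K hK k
    refine (Submodule.ne_bot_iff _).mpr ⟨z ^ k, Ideal.pow_mem_pow (hK hzI) k, pow_ne_zero k hz0⟩
  -- x ∈ J
  obtain ⟨n, c, hn, hc, he⟩ := hx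
  have hxJ : x ∈ J := by
    refine hclose ((I + Ideal.span {x}) ^ (n - 1)) (hpow_ne _ le_sup_left _) x fun m hm => ?_
    have hkey : Ideal.span {x} * (I + Ideal.span {x}) ^ (n - 1) ≤
        I * (I + Ideal.span {x}) ^ (n - 1) := by
      refine (aux_pow I x (n - 1)).trans (sup_le le_rfl ?_)
      rw [show n - 1 + 1 = n by omega, Ideal.span_singleton_le_iff_mem]
      exact xn_mem I x hn hc he
    exact hkey (Ideal.mul_mem_mul (Ideal.mem_span_singleton_self x) hm)
  -- every element of J is integral over I
  have hJint : ∀ y ∈ J, IsIntegralOverIdeal I y := fun y hy =>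
    colon_integral I M₀ hM₀ y ((hmem y).mp hy)
  -- I is a reduction of J
  have hred : ∃ r, J ^ (r + 1) = I * J ^ r := by
    obtain ⟨s, hs⟩ := (IsNoetherian.noetherian J : J.FG)
    rw [Ideal.submodule_span_eq] at hs
    have claim : ∀ s : Finset A, (↑s : Set A) ⊆ (J : Set A) →
        ∃ r, (I + Ideal.span (↑s : Set A)) ^ (r + 1) =
          I * (I + Ideal.span (↑s : Set A)) ^ r := by
      intro s
      induction s using Finset.induction_on with
      | empty =>
        intro _
        refine ⟨0, ?_⟩
        simp
      | @insert a s ha ih =>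
        intro hsub
        rw [Finset.coe_insert] at hsub
        have haJ : a ∈ J := hsub (Set.mem_insert a _)
        have hsJ : (↑s : Set A) ⊆ (J : Set A) := fun y hy => hsub (Set.mem_insert_of_mem _ hy)
        obtain ⟨r, hr⟩ := ih hsJ
        have hint : IsIntegralOverIdeal (I + Ideal.span (↑s : Set A)) a :=
          intOver_mono le_sup_left (hJint a haJ)
        obtain ⟨b, hb⟩ := red_step (I + Ideal.span (↑s : Set A)) a hint
        have hspan : I + Ideal.span (↑(insert a s) : Set A) =
            (I + Ideal.span (↑s : Set A)) + Ideal.span {a} := by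
          rw [Finset.coe_insert, Ideal.span_insert]
          ac_rfl
        rw [hspan]
        exact ⟨r + b, red_trans hr hb⟩
    obtain ⟨r, hr⟩ := claim s (hs ▸ Ideal.subset_span)
    have : I + Ideal.span (↑s : Set A) = J := by
      rw [hs]
      exact sup_eq_right.mpr hIJ
    rw [this] at hr
    exact ⟨r, hr⟩
  obtain ⟨r, hr⟩ := hred
  -- Q is a reduction of J
  have hredQ : ∃ r', J ^ (r' + 1) = Q * J ^ r' := by
    have h1 : I ^ (1 + 1) = Q * I ^ 1 := by
      rw [pow_one]
      exact hQI
    exact ⟨1 + r, red_trans h1 hr⟩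
  -- J is proper
  have hJne_top : J ≠ ⊤ := by
    intro htop
    have h1J : (1 : A) ∈ J := htop ▸ Submodule.mem_top
    have hle : M₀ ≤ I • M₀ := by
      intro m hm
      have := (hmem 1).mp h1J m hm
      rw [one_mul] at this
      rwa [Ideal.smul_eq_mul]
    have hjac : I ≤ Ideal.jacobson ⊥ := by
      refine le_trans ?_ (IsLocalRing.maximalIdeal_le_jacobson ⊥)
      rw [← hprim]
      exact Ideal.le_radical
    exact hM₀ (Submodule.eq_bot_of_le_smul_of_le_jacobson_bot I M₀
      (IsNoetherian.noetherian M₀) hle hjac)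
  have hJrad : Ideal.radical J = maximalIdeal A := by
    apply le_antisymm
    · calc Ideal.radical J ≤ Ideal.radical (maximalIdeal A) :=
            Ideal.radical_mono (IsLocalRing.le_maximalIdeal hJne_top)
        _ = maximalIdeal A := (IsLocalRing.maximalIdeal.isMaximal A).isPrime.radical
    · rw [← hprim]
      exact Ideal.radical_mono hIJ
  -- J is integrally closed
  have hJclosed : Ideal.IsIntegrallyClosedIdeal J := by
    intro y hy
    obtain ⟨m, d, hm, hd, hyeq⟩ := hy
    set L' := J + Ideal.span {y} with hL'
    have hkey : Ideal.span {y} * L' ^ (m - 1) ≤ J * L' ^ (m - 1) := by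
      refine (aux_pow J y (m - 1)).trans (sup_le le_rfl ?_)
      rw [show m - 1 + 1 = m by omega, Ideal.span_singleton_le_iff_mem]
      exact xn_mem J y hm hd hyeq
    have hJM : J * M₀ ≤ I * M₀ := Ideal.mul_le.mpr fun a ha b hb => (hmem a).mp ha b hb
    refine hclose (L' ^ (m - 1) * M₀) (mulne (hpow_ne L' (hIJ.trans le_sup_left) _) hM₀)
      y fun p hp => ?_
    have hfull : Ideal.span {y} * (L' ^ (m - 1) * M₀) ≤ I * (L' ^ (m - 1) * M₀) := by
      calc Ideal.span {y} * (L' ^ (m - 1) * M₀)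
          = (Ideal.span {y} * L' ^ (m - 1)) * M₀ := by rw [mul_assoc]
        _ ≤ (J * L' ^ (m - 1)) * M₀ := Ideal.mul_mono hkey le_rfl
        _ = L' ^ (m - 1) * (J * M₀) := by ring
        _ ≤ L' ^ (m - 1) * (I * M₀) := Ideal.mul_mono le_rfl hJM
        _ = I * (L' ^ (m - 1) * M₀) := by ring
    exact hfull (Ideal.mul_mem_mul (Ideal.mem_span_singleton_self y) hp)
  -- apply the stability hypothesis
  have hmin2 : IsMinimalReduction2 Q J := ⟨⟨hQle.trans hIJ, hredQ⟩, f, g, hQspan⟩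
  have hJ2 := hstab J Q hJrad hJclosed hmin2
  -- conclude
  have hxQ : x ∈ Q.colon I := by
    refine Submodule.mem_colon.mpr fun p hp => ?_
    rw [smul_eq_mul]
    have h2 : x * p ∈ J ^ 2 := by
      rw [pow_two]
      exact Ideal.mul_mem_mul hxJ (hIJ hp)
    rw [hJ2] at h2
    exact (Ideal.mul_le_left : Q * J ≤ Q) h2
  rwa [hQcolon] at hxQ
end

section
/- Let (A, m) be a local ring, I an m-primary ideal with two-generated minimal reduction Q = (f, g) (where f, g form a regular sequence) such that I² = QI. Then Q² : I = (Q : I)I = (Q : I)Q. -/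
open IsLocalRing

open Pointwise in
theorem quot_reg {A : Type*} [CommRing A] (f g : A) (h2 : IsSMulRegular (QuotSMulTop f A) g) :
    ∀ x y : A, g * x = f * y → ∃ z, x = f * z := by
  have key : ∀ w : A, w ∈ (f • ⊤ : Submodule A A) ↔ ∃ z, w = f * z := by
    intro w
    rw [← SetLike.mem_coe, Submodule.coe_pointwise_smul, Set.mem_smul_set]
    constructor
    · rintro ⟨z, -, hz⟩; exact ⟨z, by rw [← hz, smul_eq_mul]⟩
    · rintro ⟨z, hz⟩; exact ⟨z, trivial, by rw [hz, smul_eq_mul]⟩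
  intro x y hxy
  have h0 : g • (Submodule.Quotient.mk x : QuotSMulTop f A) = 0 := by
    rw [← Submodule.Quotient.mk_smul, Submodule.Quotient.mk_eq_zero, smul_eq_mul, key]
    exact ⟨y, hxy⟩
  have : (Submodule.Quotient.mk x : QuotSMulTop f A) = 0 := by
    apply h2; show g • _ = g • (0 : QuotSMulTop f A); rw [h0, smul_zero]
  rw [Submodule.Quotient.mk_eq_zero, key] at this
  exact this

theorem mem_triple {A : Type*} [CommRing A] {a b c x : A} :
    x ∈ Ideal.span {a, b, c} ↔ ∃ p q r, x = p*a + q*b + r*c := by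
  simp only [Ideal.mem_span_insert, Ideal.mem_span_singleton']
  constructor
  · rintro ⟨p, z, ⟨q, w, ⟨r, rfl⟩, rfl⟩, rfl⟩; exact ⟨p, q, r, by ring⟩
  · rintro ⟨p, q, r, rfl⟩; exact ⟨p, _, ⟨q, _, ⟨r, rfl⟩, rfl⟩, by ring⟩

theorem span_sq {A : Type*} [CommRing A] (f g : A) :
    (Ideal.span {f, g})^2 = Ideal.span {f*f, f*g, g*g} := by
  rw [sq]
  apply le_antisymm
  · rw [Ideal.mul_le]
    intro a ha b hb
    rw [Ideal.mem_span_pair] at ha hb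
    obtain ⟨u, v, rfl⟩ := ha
    obtain ⟨s, t, rfl⟩ := hb
    rw [mem_triple]
    exact ⟨u*s, u*t + v*s, v*t, by ring⟩
  · rw [Ideal.span_le]
    rintro x (rfl | rfl | rfl) <;>
      exact Ideal.mul_mem_mul (Ideal.subset_span (by simp)) (Ideal.subset_span (by simp))

theorem div_lemma {A : Type*} [CommRing A] {f g : A} (hf : ∀ x, f*x = 0 → x = 0)
    (hg : ∀ x y, g*x = f*y → ∃ z, x = f*z) {a : A}
    (h : a*f ∈ Ideal.span {f*f, f*g, g*g}) : ∃ α β, a = α*f + β*g := by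
  rw [mem_triple] at h
  obtain ⟨p, q, r, he⟩ := h
  have h1 : g*(g*r) = f*(a - p*f - q*g) := by linear_combination -he
  obtain ⟨r1, hr1⟩ := hg _ _ h1
  obtain ⟨r2, hr2⟩ := hg _ _ hr1
  have h2 : f * (a - p*f - q*g - r2*(g*g)) = 0 := by linear_combination he + (g*g)*hr2
  have h3 := hf _ h2
  exact ⟨p, q + r2*g, by linear_combination h3⟩


/-- Let `(A, m)` be a local ring, `I` an `m`-primary ideal with
two-generated minimal reduction `Q = (f, g)`, where `f, g` is a regular sequence,
such that `I² = QI`. Then `Q² : I = (Q : I)I = (Q : I)Q`. -/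

theorem statement4 {A : Type*} [CommRing A] [IsLocalRing A]
    (I Q : Ideal A) (f g : A) (hprim : I.radical = maximalIdeal A)
    (hfg : Q = Ideal.span {f, g}) (hreg : RingTheory.Sequence.IsRegular A [f, g])
    (hred : IsReductionOf Q I) (hstable : I ^ 2 = Q * I) :
    (Q ^ 2).colon I = (Q.colon I) * I ∧ (Q.colon I) * I = (Q.colon I) * Q := by
  obtain ⟨hQI, -⟩ := hred
  subst hfg
  have hw := hreg.toIsWeaklyRegular
  rw [RingTheory.Sequence.isWeaklyRegular_cons_iff] at hw
  obtain ⟨h1, h2⟩ := hw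
  rw [RingTheory.Sequence.isWeaklyRegular_cons_iff] at h2
  have hf : ∀ x : A, f * x = 0 → x = 0 := fun x hx =>
    h1 (show f • x = f • (0 : A) by simpa [smul_eq_mul] using hx)
  have hg' := quot_reg f g h2.1
  have hfQ : f ∈ Ideal.span {f, g} := Ideal.subset_span (by simp)
  have hgQ : g ∈ Ideal.span {f, g} := Ideal.subset_span (by simp)
  have hfI : f ∈ I := hQI hfQ
  have mc : ∀ (J P : Ideal A) (x : A), x ∈ J.colon P ↔ ∀ p ∈ P, x * p ∈ J := fun J P x => by
    simpa [smul_eq_mul] using Submodule.mem_colon (N := J) (S := (P : Set A)) (r := x)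
  have step1 : (Ideal.span {f, g}).colon I * Ideal.span {f, g} ≤
      (Ideal.span {f, g}).colon I * I := Ideal.mul_mono le_rfl hQI
  have step2 : (Ideal.span {f, g}).colon I * I ≤ ((Ideal.span {f, g}) ^ 2).colon I := by
    rw [Ideal.mul_le]
    intro a ha b hb
    rw [mc]
    intro y hy
    have hby : b * y ∈ Ideal.span {f, g} * I := by
      rw [← hstable, sq]; exact Ideal.mul_mem_mul hb hy
    have key : ∀ w ∈ Ideal.span {f, g} * I, a * w ∈ (Ideal.span {f, g}) ^ 2 := by
      intro w hw
      refine Submodule.mul_induction_on hw (fun q hq i hi => ?_) (fun x y hx hy => ?_)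
      · have hqi : a * (q * i) = q * (a * i) := by ring
        rw [hqi, sq]
        exact Ideal.mul_mem_mul hq ((mc _ _ _).1 ha i hi)
      · rw [mul_add]; exact Ideal.add_mem _ hx hy
    have := key _ hby
    rwa [mul_assoc]
  have step3 : ((Ideal.span {f, g}) ^ 2).colon I ≤
      (Ideal.span {f, g}).colon I * Ideal.span {f, g} := by
    intro a ha
    rw [mc] at ha
    have haf : a * f ∈ Ideal.span {f*f, f*g, g*g} := by
      rw [← span_sq]; exact ha f hfI
    obtain ⟨al, be, hab⟩ := div_lemma hf hg' haf
    have hbe : ∀ x ∈ I, be * x ∈ Ideal.span {f, g} := by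
      intro x hx
      have hax : a * x ∈ Ideal.span {f*f, f*g, g*g} := by
        rw [← span_sq]; exact ha x hx
      rw [mem_triple] at hax
      obtain ⟨p, q, r, he⟩ := hax
      have h3 : g * (be * x - r * g) = f * (p * f + q * g - al * x) := by
        linear_combination he - x * hab
      obtain ⟨t, ht⟩ := hg' _ _ h3
      rw [Ideal.mem_span_pair]
      exact ⟨t, r, by linear_combination -ht⟩
    have hal : ∀ x ∈ I, al * x ∈ Ideal.span {f, g} := by
      intro x hx
      have hax : a * x ∈ Ideal.span {f*f, f*g, g*g} := by
        rw [← span_sq]; exact ha x hx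
      rw [mem_triple] at hax
      obtain ⟨p, q, r, he⟩ := hax
      obtain ⟨u, v, hbx⟩ := Ideal.mem_span_pair.1 (hbe x hx)
      have h4 : (al * x) * f ∈ Ideal.span {f*f, f*g, g*g} := by
        rw [mem_triple]
        exact ⟨p, q - u, r - v, by linear_combination he - x * hab + g * hbx⟩
      obtain ⟨a', b', h5⟩ := div_lemma hf hg' h4
      rw [Ideal.mem_span_pair]
      exact ⟨a', b', h5.symm⟩
    have hmem : al * f + be * g ∈
        (Ideal.span {f, g}).colon I * Ideal.span {f, g} :=
      add_mem (Ideal.mul_mem_mul ((mc _ _ _).2 hal) hfQ)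
        (Ideal.mul_mem_mul ((mc _ _ _).2 hbe) hgQ)
    rwa [hab]
  exact ⟨le_antisymm (step3.trans step1) step2, le_antisymm (step2.trans step3) step1⟩
end

section
/- Let A = k[[x,y,z]]/(x² + y⁴ + z⁴) over an algebraically closed field k of characteristic 0. Then I = (x, y², z²) is an Ulrich ideal with ℓ_A(A/I) = 4 and minimal reduction Q = (y², z²), i.e., I² = QI and ℓ_A(A/Q) = 8. -/
open IsLocalRing

namespace Statement8Aux

open MvPowerSeries Finsupp

/-- exponent vector helper -/
noncomputable def ex (a b c : ℕ) : Fin 3 →₀ ℕ :=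
  Finsupp.single 0 a + Finsupp.single 1 b + Finsupp.single 2 c

lemma ex_apply (a b c : ℕ) : ∀ i : Fin 3, (ex a b c) i = ![a, b, c] i := by
  intro i
  fin_cases i <;> simp [ex, Finsupp.single_apply]

lemma ex_apply0 (a b c : ℕ) : (ex a b c) 0 = a := ex_apply a b c 0
lemma ex_apply1 (a b c : ℕ) : (ex a b c) 1 = b := ex_apply a b c 1
lemma ex_apply2 (a b c : ℕ) : (ex a b c) 2 = c := ex_apply a b c 2

lemma eq_ex (d : Fin 3 →₀ ℕ) : d = ex (d 0) (d 1) (d 2) := by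
  ext i
  fin_cases i <;> simp [ex_apply0, ex_apply1, ex_apply2]

lemma ex_le_iff {a b c a' b' c' : ℕ} :
    ex a b c ≤ ex a' b' c' ↔ a ≤ a' ∧ b ≤ b' ∧ c ≤ c' := by
  constructor
  · intro h
    exact ⟨by simpa [ex_apply0] using h 0, by simpa [ex_apply1] using h 1,
      by simpa [ex_apply2] using h 2⟩
  · intro ⟨h1, h2, h3⟩ i
    fin_cases i <;> simp [ex_apply0, ex_apply1, ex_apply2, h1, h2, h3]

lemma ex_add (a b c a' b' c' : ℕ) :
    ex a b c + ex a' b' c' = ex (a + a') (b + b') (c + c') := by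
  ext i
  fin_cases i <;>
    simp [ex_apply0, ex_apply1, ex_apply2]

lemma ex_sub (a b c a' b' c' : ℕ) :
    ex a b c - ex a' b' c' = ex (a - a') (b - b') (c - c') := by
  ext i
  fin_cases i <;>
    simp [Finsupp.tsub_apply, ex_apply0, ex_apply1, ex_apply2]

lemma ex_inj {a b c a' b' c' : ℕ} :
    ex a b c = ex a' b' c' ↔ a = a' ∧ b = b' ∧ c = c' := by
  constructor
  · intro h
    refine ⟨?_, ?_, ?_⟩
    · have := congrArg (fun d : Fin 3 →₀ ℕ => d 0) h; simpa [ex_apply0] using this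
    · have := congrArg (fun d : Fin 3 →₀ ℕ => d 1) h; simpa [ex_apply1] using this
    · have := congrArg (fun d : Fin 3 →₀ ℕ => d 2) h; simpa [ex_apply2] using this
  · rintro ⟨rfl, rfl, rfl⟩; rfl

lemma single0 (a : ℕ) : Finsupp.single (0 : Fin 3) a = ex a 0 0 := by
  simp [ex]
lemma single1 (b : ℕ) : Finsupp.single (1 : Fin 3) b = ex 0 b 0 := by
  simp [ex]
lemma single2 (c : ℕ) : Finsupp.single (2 : Fin 3) c = ex 0 0 c := by
  simp [ex]

end Statement8Aux

namespace Statement8Aux2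
open MvPowerSeries Statement8Aux

variable {k : Type*} [Field k]

/-- The "ideal" of power series whose coefficients vanish on the complement of the
monomial set generated by `E`. -/
noncomputable def Vid (k : Type*) [Field k] (E : Set (Fin 3 →₀ ℕ)) :
    Ideal (MvPowerSeries (Fin 3) k) where
  carrier := {g | ∀ d, (∀ e ∈ E, ¬ e ≤ d) → coeff d g = 0}
  zero_mem' := by intro d _; simp
  add_mem' := by
    intro f g hf hg d hd
    rw [map_add, hf d hd, hg d hd, add_zero]
  smul_mem' := by
    intro c g hg d hd
    rw [smul_eq_mul, coeff_mul]
    apply Finset.sum_eq_zero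
    rintro ⟨p, q⟩ hpq
    have hq : q ≤ d := by
      have := Finset.HasAntidiagonal.mem_antidiagonal.mp hpq
      exact this ▸ le_add_self
    have : coeff q g = 0 := hg q (fun e he hle => hd e he (hle.trans hq))
    simp [this]

lemma mem_Vid_iff {E : Set (Fin 3 →₀ ℕ)} {g : MvPowerSeries (Fin 3) k} :
    g ∈ Vid k E ↔ ∀ d, (∀ e ∈ E, ¬ e ≤ d) → coeff d g = 0 := Iff.rfl

lemma span_le_Vid (E : Set (Fin 3 →₀ ℕ)) :
    Ideal.span ((fun e => monomial e (1 : k)) '' E) ≤ Vid k E := by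
  rw [Ideal.span_le]
  rintro _ ⟨e, he, rfl⟩ d hd
  classical
  rw [coeff_monomial]
  exact if_neg (fun hde => hd e he (le_of_eq hde.symm))

lemma monomial_not_mem {E : Set (Fin 3 →₀ ℕ)} {e₀ : Fin 3 →₀ ℕ}
    (h : ∀ e ∈ E, ¬ e ≤ e₀) :
    (monomial e₀ (1 : k)) ∉ Ideal.span ((fun e => monomial e (1 : k)) '' E) := by
  intro hm
  have := span_le_Vid E hm e₀ h
  classical
  rw [coeff_monomial, if_pos rfl] at this
  exact one_ne_zero this

lemma mem_span_three {e₁ e₂ e₃ : Fin 3 →₀ ℕ} {g : MvPowerSeries (Fin 3) k}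
    (h : ∀ d, ¬ e₁ ≤ d → ¬ e₂ ≤ d → ¬ e₃ ≤ d → coeff d g = 0) :
    g ∈ Ideal.span {monomial e₁ 1, monomial e₂ 1, monomial e₃ 1} := by
  classical
  set h₁ : MvPowerSeries (Fin 3) k := fun c => coeff (c + e₁) g with hh₁
  set h₂ : MvPowerSeries (Fin 3) k :=
    fun c => if e₁ ≤ c + e₂ then 0 else coeff (c + e₂) g with hh₂
  set h₃ : MvPowerSeries (Fin 3) k :=
    fun c => if e₁ ≤ c + e₃ ∨ e₂ ≤ c + e₃ then 0 else coeff (c + e₃) g with hh₃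
  have hg : g = monomial e₁ 1 * h₁ + monomial e₂ 1 * h₂ + monomial e₃ 1 * h₃ := by
    apply MvPowerSeries.ext
    intro d
    rw [map_add, map_add, coeff_monomial_mul, coeff_monomial_mul, coeff_monomial_mul]
    by_cases h1 : e₁ ≤ d
    · rw [if_pos h1]
      have k1 : coeff (d - e₁) h₁ = coeff d g := by
        rw [coeff_apply, hh₁]
        show coeff (d - e₁ + e₁) g = _
        rw [tsub_add_cancel_of_le h1]
      rw [k1, one_mul]
      have k2 : (if e₂ ≤ d then (1:k) * coeff (d - e₂) h₂ else 0) = 0 := by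
        split_ifs with h2
        · have : coeff (d - e₂) h₂ = 0 := by
            rw [coeff_apply, hh₂]
            show (if e₁ ≤ d - e₂ + e₂ then (0:k) else _) = 0
            rw [tsub_add_cancel_of_le h2, if_pos h1]
          rw [this, mul_zero]
        · rfl
      have k3 : (if e₃ ≤ d then (1:k) * coeff (d - e₃) h₃ else 0) = 0 := by
        split_ifs with h3
        · have : coeff (d - e₃) h₃ = 0 := by
            rw [coeff_apply, hh₃]
            show (if e₁ ≤ d - e₃ + e₃ ∨ e₂ ≤ d - e₃ + e₃ then (0:k) else _) = 0
            rw [tsub_add_cancel_of_le h3, if_pos (Or.inl h1)]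
          rw [this, mul_zero]
        · rfl
      rw [k2, k3, add_zero, add_zero]
    · rw [if_neg h1]
      by_cases h2 : e₂ ≤ d
      · rw [if_pos h2]
        have k2 : coeff (d - e₂) h₂ = coeff d g := by
          rw [coeff_apply, hh₂]
          show (if e₁ ≤ d - e₂ + e₂ then (0:k) else coeff (d - e₂ + e₂) g) = _
          rw [tsub_add_cancel_of_le h2, if_neg h1]
        rw [k2, one_mul]
        have k3 : (if e₃ ≤ d then (1:k) * coeff (d - e₃) h₃ else 0) = 0 := by
          split_ifs with h3
          · have : coeff (d - e₃) h₃ = 0 := by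
              rw [coeff_apply, hh₃]
              show (if e₁ ≤ d - e₃ + e₃ ∨ e₂ ≤ d - e₃ + e₃ then (0:k) else _) = 0
              rw [tsub_add_cancel_of_le h3, if_pos (Or.inr h2)]
            rw [this, mul_zero]
          · rfl
        rw [k3, zero_add, add_zero]
      · rw [if_neg h2]
        by_cases h3 : e₃ ≤ d
        · rw [if_pos h3]
          have k3 : coeff (d - e₃) h₃ = coeff d g := by
            rw [coeff_apply, hh₃]
            show (if e₁ ≤ d - e₃ + e₃ ∨ e₂ ≤ d - e₃ + e₃ then (0:k)
              else coeff (d - e₃ + e₃) g) = _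
            rw [tsub_add_cancel_of_le h3, if_neg (by push_neg; exact ⟨h1, h2⟩)]
          rw [k3, one_mul, zero_add, zero_add]
        · rw [if_neg h3, h d h1 h2 h3, add_zero, add_zero]
  rw [hg]
  refine Ideal.add_mem _ (Ideal.add_mem _ ?_ ?_) ?_
  · exact Ideal.mul_mem_right _ _ (Ideal.subset_span (by simp))
  · exact Ideal.mul_mem_right _ _ (Ideal.subset_span (by simp))
  · exact Ideal.mul_mem_right _ _ (Ideal.subset_span (by simp))

end Statement8Aux2

namespace Statement8Aux3
open Statement8Aux

lemma fin_strictMono_le {n : ℕ} {f : Fin (n + 1) → ℕ} (hf : StrictMono f) :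
    n ≤ f (Fin.last n) := by
  have key : ∀ m : ℕ, ∀ hm : m ≤ n, m ≤ f ⟨m, Nat.lt_succ_of_le hm⟩ := by
    intro m
    induction m with
    | zero => intro _; exact Nat.zero_le _
    | succ m ih =>
      intro hm
      have h1 : m ≤ n := Nat.le_of_succ_le hm
      have h2 := ih h1
      have hlt : (⟨m, Nat.lt_succ_of_le h1⟩ : Fin (n + 1)) < ⟨m + 1, Nat.lt_succ_of_le hm⟩ :=
        Fin.mk_lt_mk.mpr (Nat.lt_succ_self m)
      exact Nat.succ_le_of_lt (lt_of_le_of_lt h2 (hf hlt))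
  exact key n le_rfl

lemma krullDim_le_of_span {k A M : Type*} [Field k] [CommRing A] [Algebra k A]
    [AddCommGroup M] [Module A M] [Module k M] [IsScalarTower k A M]
    (s : Finset M) (hs : Submodule.span k (s : Set M) = ⊤) :
    Order.krullDim (Submodule A M) ≤ (s.card : WithBot ℕ∞) := by
  have hfin : FiniteDimensional k M := Module.finite_def.mpr ⟨s, hs⟩
  have hrank : Module.finrank k M ≤ s.card := by
    have h1 := finrank_span_finset_le_card (R := k) s
    rw [Set.finrank, hs] at h1
    simpa using h1
  have hres : StrictMono (Submodule.restrictScalars k : Submodule A M → Submodule k M) := by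
    intro p q hpq
    refine lt_of_le_of_ne (fun x hx => hpq.le hx) ?_
    intro heq
    exact hpq.ne (Submodule.restrictScalars_injective k A M heq)
  rw [Order.krullDim]
  refine iSup_le ?_
  intro p
  have hφ : StrictMono fun i : Fin (p.length + 1) =>
      Module.finrank k (Submodule.restrictScalars k (p.toFun i)) :=
    fun i j hij => Submodule.finrank_lt_finrank_of_lt (hres (p.strictMono hij))
  have h2 : p.length ≤ Module.finrank k
      (Submodule.restrictScalars k (p.toFun (Fin.last p.length))) := fin_strictMono_le hφ
  have h3 : p.length ≤ s.card :=
    le_trans h2 (le_trans (Submodule.finrank_le _) hrank)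
  exact_mod_cast h3

lemma krullDim_le_of_span' {k A M : Type*} [Field k] [CommRing A] [Algebra k A]
    [AddCommGroup M] [Module A M] [Module k M] [IsScalarTower k A M]
    (n : ℕ) (w : Fin n → M) (hs : Submodule.span k (Set.range w) = ⊤) :
    Order.krullDim (Submodule A M) ≤ (n : WithBot ℕ∞) := by
  classical
  have hfg : (⊤ : Submodule k M).FG := by
    refine ⟨Finset.univ.image w, ?_⟩
    rw [Finset.coe_image, Finset.coe_univ, Set.image_univ, hs]
  have hfin : FiniteDimensional k M := Module.finite_def.mpr hfg
  have hrank : Module.finrank k M ≤ n := by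
    have h1 := finrank_span_le_card (R := k) (Set.range w)
    rw [hs] at h1
    rw [finrank_top] at h1
    refine le_trans h1 ?_
    rw [Set.toFinset_card]
    exact le_trans (Fintype.card_range_le w) (by simp)
  have hres : StrictMono (Submodule.restrictScalars k : Submodule A M → Submodule k M) := by
    intro p q hpq
    refine lt_of_le_of_ne (fun x hx => hpq.le hx) ?_
    intro heq
    exact hpq.ne (Submodule.restrictScalars_injective k A M heq)
  rw [Order.krullDim]
  refine iSup_le ?_
  intro p
  have hφ : StrictMono fun i : Fin (p.length + 1) =>
      Module.finrank k (Submodule.restrictScalars k (p.toFun i)) :=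
    fun i j hij => Submodule.finrank_lt_finrank_of_lt (hres (p.strictMono hij))
  have h2 : p.length ≤ Module.finrank k
      (Submodule.restrictScalars k (p.toFun (Fin.last p.length))) := fin_strictMono_le hφ
  have h3 : p.length ≤ n := le_trans h2 (le_trans (Submodule.finrank_le _) hrank)
  exact_mod_cast h3

lemma chain_le_krullDim {A : Type*} [CommRing A] {n : ℕ} (J : Ideal A)
    (L : Fin (n + 1) → Ideal A) (h0 : L 0 = J)
    (hstep : ∀ i : Fin n, L i.castSucc < L i.succ) :
    (n : WithBot ℕ∞) ≤ Order.krullDim (Submodule A (A ⧸ J)) := by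
  have hmono : StrictMono L := Fin.strictMono_iff_lt_succ.mpr hstep
  have hJle : ∀ i, J ≤ L i := fun i => h0 ▸ hmono.monotone (Fin.zero_le i)
  have hstep' : ∀ i : Fin n,
      Submodule.map J.mkQ (L i.castSucc) < Submodule.map J.mkQ (L i.succ) := by
    intro i
    refine lt_of_le_of_ne (Submodule.map_mono (hstep i).le) ?_
    intro heq
    have hc : ∀ j : Fin (n+1), Submodule.comap J.mkQ (Submodule.map J.mkQ (L j)) = L j := by
      intro j
      rw [Submodule.comap_map_eq, Submodule.ker_mkQ, sup_eq_left.mpr (hJle j)]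
    have := congrArg (Submodule.comap J.mkQ) heq
    rw [hc, hc] at this
    exact (hstep i).ne this
  let p : LTSeries (Submodule A (A ⧸ J)) :=
    ⟨n, fun i => Submodule.map J.mkQ (L i), hstep'⟩
  have := Order.LTSeries.length_le_krullDim p
  exact_mod_cast this

end Statement8Aux3

namespace Statement8Aux4
open MvPowerSeries Statement8Aux Statement8Aux2

variable (k : Type*) [Field k]

noncomputable def mono (a b c : ℕ) : MvPowerSeries (Fin 3) k := monomial (ex a b c) 1

variable {k}

lemma mono_X0 : mono k 1 0 0 = X 0 := by rw [X_def, single0]; rfl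
lemma mono_X1sq : mono k 0 2 0 = X 1 ^ 2 := by rw [X_pow_eq, single1]; rfl
lemma mono_X2sq : mono k 0 0 2 = X 2 ^ 2 := by rw [X_pow_eq, single2]; rfl
lemma mono_X0sq : mono k 2 0 0 = X 0 ^ 2 := by rw [X_pow_eq, single0]; rfl
lemma mono_X1p4 : mono k 0 4 0 = X 1 ^ 4 := by rw [X_pow_eq, single1]; rfl
lemma mono_X2p4 : mono k 0 0 4 = X 2 ^ 4 := by rw [X_pow_eq, single2]; rfl

lemma mono_mul (a b c a' b' c' : ℕ) :
    mono k a b c * mono k a' b' c' = mono k (a + a') (b + b') (c + c') := by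
  rw [mono, mono, mono, monomial_mul_monomial, ex_add, one_mul]

lemma f_eq : (X 0 ^ 2 + X 1 ^ 4 + X 2 ^ 4 : MvPowerSeries (Fin 3) k) =
    mono k 2 0 0 + mono k 0 4 0 + mono k 0 0 4 := by
  rw [mono_X0sq, mono_X1p4, mono_X2p4]

end Statement8Aux4


namespace Statement8Aux5
open MvPowerSeries Statement8Aux Statement8Aux2 Statement8Aux4

variable {k : Type*} [Field k]

/-- The monomial ideal with exponent set `E`. -/
noncomputable def mIdeal (k : Type*) [Field k] (E : Set (Fin 3 →₀ ℕ)) :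
    Ideal (MvPowerSeries (Fin 3) k) :=
  Ideal.span ((fun e => monomial e (1 : k)) '' E)

lemma mIdeal_mono {E F : Set (Fin 3 →₀ ℕ)} (h : E ⊆ F) : mIdeal k E ≤ mIdeal k F :=
  Ideal.span_mono (Set.image_mono h)

lemma monomial_mem_mIdeal {E : Set (Fin 3 →₀ ℕ)} {e : Fin 3 →₀ ℕ} (h : e ∈ E) :
    monomial e (1 : k) ∈ mIdeal k E :=
  Ideal.subset_span ⟨e, h, rfl⟩

lemma mono_mem_mIdeal {E : Set (Fin 3 →₀ ℕ)} {a b c : ℕ} (h : ex a b c ∈ E) :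
    mono k a b c ∈ mIdeal k E :=
  monomial_mem_mIdeal h

lemma mIdeal_le_Vid (E : Set (Fin 3 →₀ ℕ)) : mIdeal k E ≤ Vid k E :=
  span_le_Vid E

lemma mIdeal_triple (e₁ e₂ e₃ : Fin 3 →₀ ℕ) :
    mIdeal k {e₁, e₂, e₃} =
      Ideal.span {monomial e₁ 1, monomial e₂ 1, monomial e₃ 1} := by
  rw [mIdeal]
  congr 1
  simp [Set.image_insert_eq]

lemma mem_mIdeal_three {e₁ e₂ e₃ : Fin 3 →₀ ℕ} {g : MvPowerSeries (Fin 3) k}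
    (h : ∀ d, ¬ e₁ ≤ d → ¬ e₂ ≤ d → ¬ e₃ ≤ d → coeff d g = 0) :
    g ∈ mIdeal k {e₁, e₂, e₃} := by
  rw [mIdeal_triple]
  exact mem_span_three h

lemma map_mIdeal_lt {A : Type*} [CommRing A] (π : MvPowerSeries (Fin 3) k →+* A)
    (hA : Function.Surjective π)
    (hker : RingHom.ker π =
      Ideal.span {(X 0 : MvPowerSeries (Fin 3) k) ^ 2 + X 1 ^ 4 + X 2 ^ 4})
    (E : Set (Fin 3 →₀ ℕ)) (e₀ : Fin 3 →₀ ℕ)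
    (hfE : (X 0 ^ 2 + X 1 ^ 4 + X 2 ^ 4 : MvPowerSeries (Fin 3) k) ∈ mIdeal k E)
    (hlow : ∀ e ∈ E, ¬ e ≤ e₀) :
    Ideal.map π (mIdeal k E) < Ideal.map π (mIdeal k (insert e₀ E)) := by
  have hcomap : ∀ L : Ideal (MvPowerSeries (Fin 3) k),
      (X 0 ^ 2 + X 1 ^ 4 + X 2 ^ 4 : MvPowerSeries (Fin 3) k) ∈ L →
      Ideal.comap π (Ideal.map π L) = L := by
    intro L hL
    rw [Ideal.comap_map_of_surjective π hA]
    refine sup_eq_left.mpr ?_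
    rw [← RingHom.ker_eq_comap_bot, hker, Ideal.span_le, Set.singleton_subset_iff]
    exact hL
  refine lt_of_le_of_ne (Ideal.map_mono (mIdeal_mono (Set.subset_insert _ _))) ?_
  intro heq
  have h1 := congrArg (Ideal.comap π) heq
  rw [hcomap _ hfE, hcomap _ (mIdeal_mono (Set.subset_insert _ _) hfE)] at h1
  have h2 : monomial e₀ (1 : k) ∈ mIdeal k E := by
    rw [h1]
    exact monomial_mem_mIdeal (Set.mem_insert _ _)
  exact monomial_not_mem hlow h2

end Statement8Aux5

set_option maxHeartbeats 2000000 in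
open Statement8Aux Statement8Aux2 Statement8Aux3 Statement8Aux4 Statement8Aux5 in
open MvPowerSeries in
/-- Let `A = k[[x,y,z]]/(x² + y⁴ + z⁴)`, `k` algebraically closed of
characteristic `0`. Then `I = (x, y², z²)` is an Ulrich ideal with `ℓ_A(A/I) = 4` and
minimal reduction `Q = (y², z²)`: `I² = QI` and `ℓ_A(A/Q) = 8`. -/
theorem statement8 (k : Type*) [Field k] [IsAlgClosed k] [CharZero k]
    (A : Type*) [CommRing A] (π : MvPowerSeries (Fin 3) k →+* A)
    (hA : Function.Surjective π)
    (hker : RingHom.ker π =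
      Ideal.span {(X 0 : MvPowerSeries (Fin 3) k) ^ 2 + X 1 ^ 4 + X 2 ^ 4})
    (I Q : Ideal A)
    (hI : I = Ideal.span {π (X 0), π (X 1) ^ 2, π (X 2) ^ 2})
    (hQ : Q = Ideal.span {π (X 1) ^ 2, π (X 2) ^ 2}) :
    IsMinimalReduction2 Q I ∧ I ^ 2 = Q * I ∧ Module.Free (A ⧸ I) I.Cotangent ∧
      moduleLength A (A ⧸ I) = (4 : WithBot ℕ∞) ∧
      moduleLength A (A ⧸ Q) = (8 : WithBot ℕ∞) := by
  classical
  -- basic facts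
  have hπf : π (X 0 ^ 2 + X 1 ^ 4 + X 2 ^ 4) = 0 := by
    have : (X 0 ^ 2 + X 1 ^ 4 + X 2 ^ 4 : MvPowerSeries (Fin 3) k) ∈ RingHom.ker π := by
      rw [hker]; exact Ideal.subset_span (Set.mem_singleton _)
    rwa [RingHom.mem_ker] at this
  have hx2 : π (X 0) ^ 2 = -(π (X 1) ^ 2 * π (X 1) ^ 2) - π (X 2) ^ 2 * π (X 2) ^ 2 := by
    have h := hπf
    rw [map_add, map_add, map_pow, map_pow, map_pow] at h
    linear_combination h
  have hQle : Q ≤ I := by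
    rw [hQ, hI]
    apply Ideal.span_mono
    intro t ht
    simp only [Set.mem_insert_iff, Set.mem_singleton_iff] at ht ⊢
    tauto
  have hsq : I ^ 2 = Q * I := by
    have hxI : I = Ideal.span {π (X 0)} ⊔ Q := by
      rw [hI, hQ, Ideal.span_insert]
    apply le_antisymm
    · rw [pow_two]
      calc I * I = (Ideal.span {π (X 0)} ⊔ Q) * I := by rw [← hxI]
        _ = Ideal.span {π (X 0)} * I ⊔ Q * I := Ideal.sup_mul _ _ _
        _ ≤ Q * I := by
            refine sup_le ?_ le_rfl
            calc Ideal.span {π (X 0)} * I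
                = Ideal.span {π (X 0)} * (Ideal.span {π (X 0)} ⊔ Q) := by rw [← hxI]
              _ = Ideal.span {π (X 0)} * Ideal.span {π (X 0)} ⊔ Ideal.span {π (X 0)} * Q :=
                  Ideal.mul_sup _ _ _
              _ ≤ Q * I := by
                  refine sup_le ?_ ?_
                  · rw [Ideal.span_singleton_mul_span_singleton, ← pow_two]
                    rw [Ideal.span_le, Set.singleton_subset_iff]
                    rw [SetLike.mem_coe, hx2]
                    refine Submodule.sub_mem _ (Submodule.neg_mem _ ?_) ?_
                    · exact Ideal.mul_mem_mul (by rw [hQ]; exact Ideal.subset_span (by simp))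
                        (by rw [hI]; exact Ideal.subset_span (by simp))
                    · exact Ideal.mul_mem_mul (by rw [hQ]; exact Ideal.subset_span (by simp))
                        (by rw [hI]; exact Ideal.subset_span (by simp))
                  · rw [mul_comm]
                    exact Ideal.mul_mono le_rfl (hxI ▸ le_sup_left)
    · rw [pow_two]
      exact Ideal.mul_mono hQle le_rfl
  refine ⟨⟨⟨hQle, 1, by rw [pow_one, ← hsq]⟩, π (X 1) ^ 2, π (X 2) ^ 2, hQ⟩, hsq, ?_, ?_, ?_⟩
  · -- freeness of the cotangent module
    have hImap : Ideal.map π (mIdeal k {ex 1 0 0, ex 0 2 0, ex 0 0 2}) = I := by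
      rw [mIdeal, Ideal.map_span, hI]
      congr 1
      simp only [Set.image_insert_eq, Set.image_singleton]
      rw [show (monomial (ex 1 0 0) (1:k)) = X 0 from mono_X0,
        show (monomial (ex 0 2 0) (1:k)) = X 1 ^ 2 from mono_X1sq,
        show (monomial (ex 0 0 2) (1:k)) = X 2 ^ 2 from mono_X2sq, map_pow, map_pow]
    have hcomap : ∀ L : Ideal (MvPowerSeries (Fin 3) k),
        (X 0 ^ 2 + X 1 ^ 4 + X 2 ^ 4 : MvPowerSeries (Fin 3) k) ∈ L →
        Ideal.comap π (Ideal.map π L) = L := by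
      intro L hL
      rw [Ideal.comap_map_of_surjective π hA]
      refine sup_eq_left.mpr ?_
      rw [← RingHom.ker_eq_comap_bot, hker, Ideal.span_le, Set.singleton_subset_iff]
      exact hL
    have hm200 : mono k 2 0 0 = mono k 1 0 0 * mono k 1 0 0 := by rw [mono_mul]
    have hm040 : mono k 0 4 0 = mono k 0 2 0 * mono k 0 2 0 := by rw [mono_mul]
    have hm004 : mono k 0 0 4 = mono k 0 0 2 * mono k 0 0 2 := by rw [mono_mul]
    have hfsq : (X 0 ^ 2 + X 1 ^ 4 + X 2 ^ 4 : MvPowerSeries (Fin 3) k) ∈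
        (mIdeal k {ex 1 0 0, ex 0 2 0, ex 0 0 2}) ^ 2 := by
      rw [pow_two, f_eq, hm200, hm040, hm004]
      refine Ideal.add_mem _ (Ideal.add_mem _ ?_ ?_) ?_ <;>
        exact Ideal.mul_mem_mul (mono_mem_mIdeal (by simp)) (mono_mem_mIdeal (by simp))
    have hVid : (mIdeal k {ex 1 0 0, ex 0 2 0, ex 0 0 2}) ^ 2 ≤
        Vid k {ex 2 0 0, ex 1 2 0, ex 1 0 2, ex 0 4 0, ex 0 2 2, ex 0 0 4} := by
      rw [pow_two, mIdeal, Ideal.span_mul_span']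
      rw [Ideal.span_le]
      rintro t ⟨u, hu, v, hv, rfl⟩
      obtain ⟨e, he, rfl⟩ := hu
      obtain ⟨e', he', rfl⟩ := hv
      simp only [Set.mem_insert_iff, Set.mem_singleton_iff] at he he'
      have key : ∀ a b c a' b' c' : ℕ, ex (a + a') (b + b') (c + c') ∈
          ({ex 2 0 0, ex 1 2 0, ex 1 0 2, ex 0 4 0, ex 0 2 2, ex 0 0 4} :
            Set (Fin 3 →₀ ℕ)) →
          (monomial (ex a b c) (1:k)) * monomial (ex a' b' c') 1 ∈
            Vid k {ex 2 0 0, ex 1 2 0, ex 1 0 2, ex 0 4 0, ex 0 2 2, ex 0 0 4} := by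
        intro a b c a' b' c' hmem
        rw [monomial_mul_monomial, one_mul, ex_add]
        exact mIdeal_le_Vid _ (monomial_mem_mIdeal hmem)
      rcases he with rfl | rfl | rfl <;> rcases he' with rfl | rfl | rfl <;>
        · apply key
          norm_num [ex_inj]
    -- the key computation
    have key : ∀ a₀ a₁ a₂ : A,
        a₀ * π (X 0) + a₁ * π (X 1) ^ 2 + a₂ * π (X 2) ^ 2 ∈ I ^ 2 →
        a₀ ∈ I ∧ a₁ ∈ I ∧ a₂ ∈ I := by
      intro a₀ a₁ a₂ hmem
      obtain ⟨g₀, rfl⟩ := hA a₀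
      obtain ⟨g₁, rfl⟩ := hA a₁
      obtain ⟨g₂, rfl⟩ := hA a₂
      set h' : MvPowerSeries (Fin 3) k := monomial (ex 1 0 0) 1 * g₀
        + monomial (ex 0 2 0) 1 * g₁ + monomial (ex 0 0 2) 1 * g₂ with hh'
      have heq : π h' = π g₀ * π (X 0) + π g₁ * π (X 1) ^ 2 + π g₂ * π (X 2) ^ 2 := by
        rw [hh', map_add, map_add, map_mul, map_mul, map_mul,
          show π (monomial (ex 1 0 0) 1) = π (X 0) from congrArg π mono_X0,
          show π (monomial (ex 0 2 0) 1) = π (X 1 ^ 2) from congrArg π mono_X1sq,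
          show π (monomial (ex 0 0 2) 1) = π (X 2 ^ 2) from congrArg π mono_X2sq,
          map_pow, map_pow]
        ring
      have hmem2 : h' ∈ (mIdeal k {ex 1 0 0, ex 0 2 0, ex 0 0 2}) ^ 2 := by
        have h1 : h' ∈ Ideal.comap π (I ^ 2) := by
          rw [Ideal.mem_comap, heq]
          exact hmem
        rwa [← hImap, ← Ideal.map_pow, hcomap _ hfsq] at h1
      have hcf := hVid hmem2
      rw [mem_Vid_iff] at hcf
      rw [hh'] at hcf
      refine ⟨?_, ?_, ?_⟩
      · -- g₀ ∈ I
        rw [← hImap]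
        refine Ideal.mem_map_of_mem π ?_
        apply mem_mIdeal_three
        intro d h1 h2 h3
        rw [eq_ex d] at h1 h2 h3 ⊢
        rw [ex_le_iff] at h1 h2 h3
        have hd0 : d 0 = 0 := by omega
        have hd1 : d 1 ≤ 1 := by omega
        have hd2 : d 2 ≤ 1 := by omega
        have hlow : ∀ e ∈ ({ex 2 0 0, ex 1 2 0, ex 1 0 2, ex 0 4 0, ex 0 2 2, ex 0 0 4} :
            Set (Fin 3 →₀ ℕ)), ¬ e ≤ ex 1 (d 1) (d 2) := by
          intro e he
          simp only [Set.mem_insert_iff, Set.mem_singleton_iff] at he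
          rcases he with rfl | rfl | rfl | rfl | rfl | rfl <;> (rw [ex_le_iff]; omega)
        have h0 := hcf (ex 1 (d 1) (d 2)) hlow
        rw [map_add, map_add, coeff_monomial_mul, coeff_monomial_mul, coeff_monomial_mul,
          if_pos (ex_le_iff.mpr (by omega)), if_neg (by rw [ex_le_iff]; omega),
          if_neg (by rw [ex_le_iff]; omega), ex_sub] at h0
        simp only [Nat.sub_self, Nat.sub_zero, one_mul, add_zero] at h0
        rw [hd0]
        exact h0
      · -- g₁ ∈ I
        rw [← hImap]
        refine Ideal.mem_map_of_mem π ?_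
        apply mem_mIdeal_three
        intro d h1 h2 h3
        rw [eq_ex d] at h1 h2 h3 ⊢
        rw [ex_le_iff] at h1 h2 h3
        have hd0 : d 0 = 0 := by omega
        have hd1 : d 1 ≤ 1 := by omega
        have hd2 : d 2 ≤ 1 := by omega
        have hlow : ∀ e ∈ ({ex 2 0 0, ex 1 2 0, ex 1 0 2, ex 0 4 0, ex 0 2 2, ex 0 0 4} :
            Set (Fin 3 →₀ ℕ)), ¬ e ≤ ex 0 (d 1 + 2) (d 2) := by
          intro e he
          simp only [Set.mem_insert_iff, Set.mem_singleton_iff] at he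
          rcases he with rfl | rfl | rfl | rfl | rfl | rfl <;> (rw [ex_le_iff]; omega)
        have h0 := hcf (ex 0 (d 1 + 2) (d 2)) hlow
        rw [map_add, map_add, coeff_monomial_mul, coeff_monomial_mul, coeff_monomial_mul,
          if_neg (by rw [ex_le_iff]; omega), if_pos (ex_le_iff.mpr (by omega)),
          if_neg (by rw [ex_le_iff]; omega), ex_sub] at h0
        simp only [Nat.sub_self, Nat.sub_zero, Nat.add_sub_cancel, one_mul, add_zero,
          zero_add] at h0
        rw [hd0]
        exact h0
      · -- g₂ ∈ I
        rw [← hImap]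
        refine Ideal.mem_map_of_mem π ?_
        apply mem_mIdeal_three
        intro d h1 h2 h3
        rw [eq_ex d] at h1 h2 h3 ⊢
        rw [ex_le_iff] at h1 h2 h3
        have hd0 : d 0 = 0 := by omega
        have hd1 : d 1 ≤ 1 := by omega
        have hd2 : d 2 ≤ 1 := by omega
        have hlow : ∀ e ∈ ({ex 2 0 0, ex 1 2 0, ex 1 0 2, ex 0 4 0, ex 0 2 2, ex 0 0 4} :
            Set (Fin 3 →₀ ℕ)), ¬ e ≤ ex 0 (d 1) (d 2 + 2) := by
          intro e he
          simp only [Set.mem_insert_iff, Set.mem_singleton_iff] at he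
          rcases he with rfl | rfl | rfl | rfl | rfl | rfl <;> (rw [ex_le_iff]; omega)
        have h0 := hcf (ex 0 (d 1) (d 2 + 2)) hlow
        rw [map_add, map_add, coeff_monomial_mul, coeff_monomial_mul, coeff_monomial_mul,
          if_neg (by rw [ex_le_iff]; omega), if_neg (by rw [ex_le_iff]; omega),
          if_pos (ex_le_iff.mpr (by omega)), ex_sub] at h0
        simp only [Nat.sub_self, Nat.sub_zero, Nat.add_sub_cancel, one_mul, add_zero,
          zero_add] at h0
        rw [hd0]
        exact h0
    -- now build the basis
    have hxI : π (X 0) ∈ I := by rw [hI]; exact Ideal.subset_span (by simp)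
    have hyI : π (X 1) ^ 2 ∈ I := by rw [hI]; exact Ideal.subset_span (by simp)
    have hzI : π (X 2) ^ 2 ∈ I := by rw [hI]; exact Ideal.subset_span (by simp)
    set v : Fin 3 → I.Cotangent := ![I.toCotangent ⟨π (X 0), hxI⟩,
      I.toCotangent ⟨π (X 1) ^ 2, hyI⟩, I.toCotangent ⟨π (X 2) ^ 2, hzI⟩] with hv
    have hsmul : ∀ (a : A) (w : A) (hw : w ∈ I),
        (Ideal.Quotient.mk I a) • I.toCotangent ⟨w, hw⟩ =
          I.toCotangent ⟨a * w, I.mul_mem_left a hw⟩ := by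
      intro a w hw
      have h1 : (Ideal.Quotient.mk I a) • I.toCotangent ⟨w, hw⟩
          = a • I.toCotangent ⟨w, hw⟩ := rfl
      rw [h1, ← map_smul]
      rfl
    have hli : LinearIndependent (A ⧸ I) v := by
      rw [Fintype.linearIndependent_iff]
      intro gc hsum i
      obtain ⟨a₀, ha₀⟩ := Ideal.Quotient.mk_surjective (gc 0)
      obtain ⟨a₁, ha₁⟩ := Ideal.Quotient.mk_surjective (gc 1)
      obtain ⟨a₂, ha₂⟩ := Ideal.Quotient.mk_surjective (gc 2)
      rw [Fin.sum_univ_three, ← ha₀, ← ha₁, ← ha₂, hv] at hsum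
      have hv0 : (![I.toCotangent ⟨π (X 0), hxI⟩, I.toCotangent ⟨π (X 1) ^ 2, hyI⟩,
          I.toCotangent ⟨π (X 2) ^ 2, hzI⟩]) 0 = I.toCotangent ⟨π (X 0), hxI⟩ := rfl
      have hv1 : (![I.toCotangent ⟨π (X 0), hxI⟩, I.toCotangent ⟨π (X 1) ^ 2, hyI⟩,
          I.toCotangent ⟨π (X 2) ^ 2, hzI⟩]) 1 = I.toCotangent ⟨π (X 1) ^ 2, hyI⟩ := rfl
      have hv2 : (![I.toCotangent ⟨π (X 0), hxI⟩, I.toCotangent ⟨π (X 1) ^ 2, hyI⟩,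
          I.toCotangent ⟨π (X 2) ^ 2, hzI⟩]) 2 = I.toCotangent ⟨π (X 2) ^ 2, hzI⟩ := rfl
      rw [hv0, hv1, hv2, hsmul, hsmul, hsmul, ← map_add, ← map_add] at hsum
      have hsum2 : (⟨a₀ * π (X 0), I.mul_mem_left a₀ hxI⟩ : I)
          + ⟨a₁ * π (X 1) ^ 2, I.mul_mem_left a₁ hyI⟩
          + ⟨a₂ * π (X 2) ^ 2, I.mul_mem_left a₂ hzI⟩
          = (⟨a₀ * π (X 0) + a₁ * π (X 1) ^ 2 + a₂ * π (X 2) ^ 2,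
              I.add_mem (I.add_mem (I.mul_mem_left a₀ hxI) (I.mul_mem_left a₁ hyI))
                (I.mul_mem_left a₂ hzI)⟩ : I) := rfl
      rw [hsum2, Ideal.toCotangent_eq_zero] at hsum
      obtain ⟨k₀, k₁, k₂⟩ := key a₀ a₁ a₂ hsum
      fin_cases i
      · show gc 0 = 0
        rw [← ha₀, Ideal.Quotient.eq_zero_iff_mem]; exact k₀
      · show gc 1 = 0
        rw [← ha₁, Ideal.Quotient.eq_zero_iff_mem]; exact k₁
      · show gc 2 = 0
        rw [← ha₂, Ideal.Quotient.eq_zero_iff_mem]; exact k₂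
    have hsp : ⊤ ≤ Submodule.span (A ⧸ I) (Set.range v) := by
      rintro m -
      obtain ⟨⟨w, hw⟩, rfl⟩ := I.toCotangent_surjective m
      have hw' : w ∈ Ideal.span ({π (X 0), π (X 1) ^ 2, π (X 2) ^ 2} : Set A) := by
        rw [← hI]; exact hw
      refine Submodule.span_induction
        (p := fun x _ => ∀ hx : x ∈ I,
          I.toCotangent ⟨x, hx⟩ ∈ Submodule.span (A ⧸ I) (Set.range v)) ?_ ?_ ?_ ?_ hw' hw
      · intro x hx
        simp only [Set.mem_insert_iff, Set.mem_singleton_iff] at hx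
        rcases hx with rfl | rfl | rfl
        · exact fun _ => Submodule.subset_span ⟨0, rfl⟩
        · exact fun _ => Submodule.subset_span ⟨1, rfl⟩
        · exact fun _ => Submodule.subset_span ⟨2, rfl⟩
      · intro hx
        have h1 : I.toCotangent ⟨0, hx⟩ = 0 := map_zero _
        rw [h1]
        exact Submodule.zero_mem _
      · intro x y hxs hys hx hy hxy
        have hxI' : x ∈ I := by rw [hI]; exact hxs
        have hyI' : y ∈ I := by rw [hI]; exact hys
        have h1 : I.toCotangent ⟨x + y, hxy⟩
            = I.toCotangent ⟨x, hxI'⟩ + I.toCotangent ⟨y, hyI'⟩ := by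
          rw [← map_add]; rfl
        rw [h1]
        exact Submodule.add_mem _ (hx hxI') (hy hyI')
      · intro a x hxs hx hax
        have hxI' : x ∈ I := by rw [hI]; exact hxs
        have h1 : I.toCotangent ⟨a • x, hax⟩
            = (Ideal.Quotient.mk I a) • I.toCotangent ⟨x, hxI'⟩ := by
          rw [hsmul]; rfl
        rw [h1]
        exact Submodule.smul_mem _ _ (hx hxI')
    exact Module.Free.of_basis (Module.Basis.mk hli hsp)
  · -- length 4
    have hImap : Ideal.map π (mIdeal k {ex 1 0 0, ex 0 2 0, ex 0 0 2}) = I := by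
      rw [mIdeal, Ideal.map_span, hI]
      congr 1
      simp only [Set.image_insert_eq, Set.image_singleton]
      rw [show (monomial (ex 1 0 0) (1:k)) = X 0 from mono_X0,
        show (monomial (ex 0 2 0) (1:k)) = X 1 ^ 2 from mono_X1sq,
        show (monomial (ex 0 0 2) (1:k)) = X 2 ^ 2 from mono_X2sq, map_pow, map_pow]
    have hm200 : mono k 2 0 0 = mono k 1 0 0 * mono k 1 0 0 := by rw [mono_mul]
    have hm040 : mono k 0 4 0 = mono k 0 2 0 * mono k 0 2 0 := by rw [mono_mul]
    have hm004 : mono k 0 0 4 = mono k 0 0 2 * mono k 0 0 2 := by rw [mono_mul]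
    have hfE0 : (X 0 ^ 2 + X 1 ^ 4 + X 2 ^ 4 : MvPowerSeries (Fin 3) k) ∈
        mIdeal k {ex 1 0 0, ex 0 2 0, ex 0 0 2} := by
      rw [f_eq, hm200, hm040, hm004]
      refine Ideal.add_mem _ (Ideal.add_mem _ ?_ ?_) ?_ <;>
        exact Ideal.mul_mem_left _ _ (mono_mem_mIdeal (by simp))
    have hfE1 := mIdeal_mono (Set.subset_insert (ex 0 1 1) _) hfE0
    have hfE2 := mIdeal_mono (Set.subset_insert (ex 0 0 1) _) hfE1
    have hfE3 := mIdeal_mono (Set.subset_insert (ex 0 1 0) _) hfE2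
    have h01 := map_mIdeal_lt π hA hker _ (ex 0 1 1) hfE0 (by
      intro e he
      simp only [Set.mem_insert_iff, Set.mem_singleton_iff] at he
      rcases he with rfl | rfl | rfl <;> (rw [ex_le_iff]; omega))
    have h12 := map_mIdeal_lt π hA hker _ (ex 0 0 1) hfE1 (by
      intro e he
      simp only [Set.mem_insert_iff, Set.mem_singleton_iff] at he
      rcases he with rfl | rfl | rfl | rfl <;> (rw [ex_le_iff]; omega))
    have h23 := map_mIdeal_lt π hA hker _ (ex 0 1 0) hfE2 (by
      intro e he
      simp only [Set.mem_insert_iff, Set.mem_singleton_iff] at he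
      rcases he with rfl | rfl | rfl | rfl | rfl <;> (rw [ex_le_iff]; omega))
    have h34 := map_mIdeal_lt π hA hker _ (ex 0 0 0) hfE3 (by
      intro e he
      simp only [Set.mem_insert_iff, Set.mem_singleton_iff] at he
      rcases he with rfl | rfl | rfl | rfl | rfl | rfl <;> (rw [ex_le_iff]; omega))
    have hlow : ((4 : ℕ) : WithBot ℕ∞) ≤ Order.krullDim (Submodule A (A ⧸ I)) := by
      refine chain_le_krullDim I
        ![Ideal.map π (mIdeal k {ex 1 0 0, ex 0 2 0, ex 0 0 2}),
          Ideal.map π (mIdeal k {ex 0 1 1, ex 1 0 0, ex 0 2 0, ex 0 0 2}),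
          Ideal.map π (mIdeal k {ex 0 0 1, ex 0 1 1, ex 1 0 0, ex 0 2 0, ex 0 0 2}),
          Ideal.map π (mIdeal k {ex 0 1 0, ex 0 0 1, ex 0 1 1, ex 1 0 0, ex 0 2 0, ex 0 0 2}),
          Ideal.map π (mIdeal k
            {ex 0 0 0, ex 0 1 0, ex 0 0 1, ex 0 1 1, ex 1 0 0, ex 0 2 0, ex 0 0 2})]
        hImap ?_
      intro i
      fin_cases i
      · exact h01
      · exact h12
      · exact h23
      · exact h34
    letI : Algebra k A := (π.comp (MvPowerSeries.C (σ := Fin 3) (R := k))).toAlgebra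
    have hspan : Submodule.span k
        (Set.range ![Ideal.Quotient.mk I (π (monomial (ex 0 0 0) 1)),
           Ideal.Quotient.mk I (π (monomial (ex 0 1 0) 1)),
           Ideal.Quotient.mk I (π (monomial (ex 0 0 1) 1)),
           Ideal.Quotient.mk I (π (monomial (ex 0 1 1) 1))]) = ⊤ := by
      rw [eq_top_iff]
      rintro m -
      obtain ⟨g, rfl⟩ : ∃ g, Ideal.Quotient.mk I (π g) = m := by
        obtain ⟨a, rfl⟩ := Ideal.Quotient.mk_surjective m
        obtain ⟨g, rfl⟩ := hA a
        exact ⟨g, rfl⟩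
      set corr : MvPowerSeries (Fin 3) k :=
        monomial (ex 0 0 0) (coeff (ex 0 0 0) g)
        + monomial (ex 0 1 0) (coeff (ex 0 1 0) g)
        + monomial (ex 0 0 1) (coeff (ex 0 0 1) g)
        + monomial (ex 0 1 1) (coeff (ex 0 1 1) g) with hcorr
      have hdiff : g - corr ∈ mIdeal k {ex 1 0 0, ex 0 2 0, ex 0 0 2} := by
        apply mem_mIdeal_three
        intro d h1 h2 h3
        rw [eq_ex d] at h1 h2 h3 ⊢
        rw [ex_le_iff] at h1 h2 h3
        have hd0 : d 0 = 0 := by omega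
        have hd1 : d 1 ≤ 1 := by omega
        have hd2 : d 2 ≤ 1 := by omega
        rw [hd0]
        rw [map_sub, hcorr]
        rw [map_add, map_add, map_add, coeff_monomial, coeff_monomial, coeff_monomial,
          coeff_monomial]
        rcases Nat.le_one_iff_eq_zero_or_eq_one.mp hd1 with h1' | h1' <;>
          rcases Nat.le_one_iff_eq_zero_or_eq_one.mp hd2 with h2' | h2' <;>
          (rw [h1', h2']; norm_num [ex_inj])
      have hIm : Ideal.Quotient.mk I (π (g - corr)) = 0 := by
        rw [Ideal.Quotient.eq_zero_iff_mem, ← hImap]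
        exact Ideal.mem_map_of_mem π hdiff
      have hg : Ideal.Quotient.mk I (π g) = Ideal.Quotient.mk I (π corr) := by
        have h5 : g = corr + (g - corr) := by ring
        rw [h5, map_add, map_add, hIm, add_zero]
      have hterm : ∀ (e : Fin 3 →₀ ℕ) (c : k), Ideal.Quotient.mk I (π (monomial e c))
          = c • Ideal.Quotient.mk I (π (monomial e 1)) := by
        intro e c
        have h1 : (monomial e c) = (MvPowerSeries.C (σ := Fin 3) (R := k) c) * monomial e 1 := by
          rw [← monomial_zero_eq_C_apply, monomial_mul_monomial, zero_add, mul_one]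
        rw [h1, map_mul, map_mul, Algebra.smul_def]
        rfl
      have hfinal : Ideal.Quotient.mk I (π corr) =
          (coeff (ex 0 0 0) g) • Ideal.Quotient.mk I (π (monomial (ex 0 0 0) 1))
          + (coeff (ex 0 1 0) g) • Ideal.Quotient.mk I (π (monomial (ex 0 1 0) 1))
          + (coeff (ex 0 0 1) g) • Ideal.Quotient.mk I (π (monomial (ex 0 0 1) 1))
          + (coeff (ex 0 1 1) g) • Ideal.Quotient.mk I (π (monomial (ex 0 1 1) 1)) := by
        rw [hcorr, map_add, map_add, map_add, map_add, map_add, map_add,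
          hterm (ex 0 0 0) (coeff (ex 0 0 0) g), hterm (ex 0 1 0) (coeff (ex 0 1 0) g),
          hterm (ex 0 0 1) (coeff (ex 0 0 1) g), hterm (ex 0 1 1) (coeff (ex 0 1 1) g)]
      rw [hg, hfinal]
      refine Submodule.add_mem _ (Submodule.add_mem _ (Submodule.add_mem _ ?_ ?_) ?_) ?_
      exacts [Submodule.smul_mem _ _ (Submodule.subset_span ⟨0, rfl⟩),
        Submodule.smul_mem _ _ (Submodule.subset_span ⟨1, rfl⟩),
        Submodule.smul_mem _ _ (Submodule.subset_span ⟨2, rfl⟩),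
        Submodule.smul_mem _ _ (Submodule.subset_span ⟨3, rfl⟩)]
    have hub := krullDim_le_of_span' (A := A) (M := A ⧸ I) 4 _ hspan
    show Order.krullDim (Submodule A (A ⧸ I)) = (4 : WithBot ℕ∞)
    refine le_antisymm (le_trans hub (by norm_num)) ?_
    exact_mod_cast hlow
  · -- length 8
    have hQmap : Ideal.map π (mIdeal k {ex 2 0 0, ex 0 2 0, ex 0 0 2}) = Q := by
      rw [mIdeal, Ideal.map_span]
      simp only [Set.image_insert_eq, Set.image_singleton]
      rw [show (monomial (ex 2 0 0) (1:k)) = X 0 ^ 2 from mono_X0sq,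
        show (monomial (ex 0 2 0) (1:k)) = X 1 ^ 2 from mono_X1sq,
        show (monomial (ex 0 0 2) (1:k)) = X 2 ^ 2 from mono_X2sq,
        map_pow, map_pow, map_pow, hQ]
      apply le_antisymm
      · rw [Ideal.span_le]
        rintro t ht
        simp only [Set.mem_insert_iff, Set.mem_singleton_iff] at ht
        rcases ht with rfl | rfl | rfl
        · rw [SetLike.mem_coe, hx2]
          refine Submodule.sub_mem _ (Submodule.neg_mem _ ?_) ?_ <;>
            exact Ideal.mul_mem_right _ _ (Ideal.subset_span (by simp))
        · exact Ideal.subset_span (by simp)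
        · exact Ideal.subset_span (by simp)
      · apply Ideal.span_mono
        intro t ht
        simp only [Set.mem_insert_iff, Set.mem_singleton_iff] at ht ⊢
        tauto
    have hm040 : mono k 0 4 0 = mono k 0 2 0 * mono k 0 2 0 := by rw [mono_mul]
    have hm004 : mono k 0 0 4 = mono k 0 0 2 * mono k 0 0 2 := by rw [mono_mul]
    have hfK0 : (X 0 ^ 2 + X 1 ^ 4 + X 2 ^ 4 : MvPowerSeries (Fin 3) k) ∈
        mIdeal k {ex 2 0 0, ex 0 2 0, ex 0 0 2} := by
      rw [f_eq, hm040, hm004]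
      refine Ideal.add_mem _ (Ideal.add_mem _ ?_ ?_) ?_
      · exact mono_mem_mIdeal (by simp)
      · exact Ideal.mul_mem_left _ _ (mono_mem_mIdeal (by simp))
      · exact Ideal.mul_mem_left _ _ (mono_mem_mIdeal (by simp))
    have hfK1 := mIdeal_mono (Set.subset_insert (ex 1 1 1) _) hfK0
    have hfK2 := mIdeal_mono (Set.subset_insert (ex 0 1 1) _) hfK1
    have hfK3 := mIdeal_mono (Set.subset_insert (ex 1 0 1) _) hfK2
    have hfK4 := mIdeal_mono (Set.subset_insert (ex 1 1 0) _) hfK3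
    have hfK5 := mIdeal_mono (Set.subset_insert (ex 0 0 1) _) hfK4
    have hfK6 := mIdeal_mono (Set.subset_insert (ex 0 1 0) _) hfK5
    have hfK7 := mIdeal_mono (Set.subset_insert (ex 1 0 0) _) hfK6
    have g01 := map_mIdeal_lt π hA hker _ (ex 1 1 1) hfK0 (by
      intro e he
      simp only [Set.mem_insert_iff, Set.mem_singleton_iff] at he
      rcases he with rfl | rfl | rfl <;> (rw [ex_le_iff]; omega))
    have g12 := map_mIdeal_lt π hA hker _ (ex 0 1 1) hfK1 (by
      intro e he
      simp only [Set.mem_insert_iff, Set.mem_singleton_iff] at he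
      rcases he with rfl | rfl | rfl | rfl <;> (rw [ex_le_iff]; omega))
    have g23 := map_mIdeal_lt π hA hker _ (ex 1 0 1) hfK2 (by
      intro e he
      simp only [Set.mem_insert_iff, Set.mem_singleton_iff] at he
      rcases he with rfl | rfl | rfl | rfl | rfl <;> (rw [ex_le_iff]; omega))
    have g34 := map_mIdeal_lt π hA hker _ (ex 1 1 0) hfK3 (by
      intro e he
      simp only [Set.mem_insert_iff, Set.mem_singleton_iff] at he
      rcases he with rfl | rfl | rfl | rfl | rfl | rfl <;> (rw [ex_le_iff]; omega))
    have g45 := map_mIdeal_lt π hA hker _ (ex 0 0 1) hfK4 (by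
      intro e he
      simp only [Set.mem_insert_iff, Set.mem_singleton_iff] at he
      rcases he with rfl | rfl | rfl | rfl | rfl | rfl | rfl <;> (rw [ex_le_iff]; omega))
    have g56 := map_mIdeal_lt π hA hker _ (ex 0 1 0) hfK5 (by
      intro e he
      simp only [Set.mem_insert_iff, Set.mem_singleton_iff] at he
      rcases he with rfl | rfl | rfl | rfl | rfl | rfl | rfl | rfl <;> (rw [ex_le_iff]; omega))
    have g67 := map_mIdeal_lt π hA hker _ (ex 1 0 0) hfK6 (by
      intro e he
      simp only [Set.mem_insert_iff, Set.mem_singleton_iff] at he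
      rcases he with rfl | rfl | rfl | rfl | rfl | rfl | rfl | rfl | rfl <;>
        (rw [ex_le_iff]; omega))
    have g78 := map_mIdeal_lt π hA hker _ (ex 0 0 0) hfK7 (by
      intro e he
      simp only [Set.mem_insert_iff, Set.mem_singleton_iff] at he
      rcases he with rfl | rfl | rfl | rfl | rfl | rfl | rfl | rfl | rfl | rfl <;>
        (rw [ex_le_iff]; omega))
    have hlow : ((8 : ℕ) : WithBot ℕ∞) ≤ Order.krullDim (Submodule A (A ⧸ Q)) := by
      refine chain_le_krullDim Q
        ![Ideal.map π (mIdeal k {ex 2 0 0, ex 0 2 0, ex 0 0 2}),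
          Ideal.map π (mIdeal k {ex 1 1 1, ex 2 0 0, ex 0 2 0, ex 0 0 2}),
          Ideal.map π (mIdeal k {ex 0 1 1, ex 1 1 1, ex 2 0 0, ex 0 2 0, ex 0 0 2}),
          Ideal.map π (mIdeal k {ex 1 0 1, ex 0 1 1, ex 1 1 1, ex 2 0 0, ex 0 2 0, ex 0 0 2}),
          Ideal.map π (mIdeal k
            {ex 1 1 0, ex 1 0 1, ex 0 1 1, ex 1 1 1, ex 2 0 0, ex 0 2 0, ex 0 0 2}),
          Ideal.map π (mIdeal k
            {ex 0 0 1, ex 1 1 0, ex 1 0 1, ex 0 1 1, ex 1 1 1, ex 2 0 0, ex 0 2 0, ex 0 0 2}),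
          Ideal.map π (mIdeal k
            {ex 0 1 0, ex 0 0 1, ex 1 1 0, ex 1 0 1, ex 0 1 1, ex 1 1 1, ex 2 0 0, ex 0 2 0,
              ex 0 0 2}),
          Ideal.map π (mIdeal k
            {ex 1 0 0, ex 0 1 0, ex 0 0 1, ex 1 1 0, ex 1 0 1, ex 0 1 1, ex 1 1 1, ex 2 0 0,
              ex 0 2 0, ex 0 0 2}),
          Ideal.map π (mIdeal k
            {ex 0 0 0, ex 1 0 0, ex 0 1 0, ex 0 0 1, ex 1 1 0, ex 1 0 1, ex 0 1 1, ex 1 1 1,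
              ex 2 0 0, ex 0 2 0, ex 0 0 2})]
        hQmap ?_
      intro i
      fin_cases i
      · exact g01
      · exact g12
      · exact g23
      · exact g34
      · exact g45
      · exact g56
      · exact g67
      · exact g78
    letI : Algebra k A := (π.comp (MvPowerSeries.C (σ := Fin 3) (R := k))).toAlgebra
    have hspan : Submodule.span k
        (Set.range ![Ideal.Quotient.mk Q (π (monomial (ex 0 0 0) 1)),
           Ideal.Quotient.mk Q (π (monomial (ex 1 0 0) 1)),
           Ideal.Quotient.mk Q (π (monomial (ex 0 1 0) 1)),
           Ideal.Quotient.mk Q (π (monomial (ex 0 0 1) 1)),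
           Ideal.Quotient.mk Q (π (monomial (ex 1 1 0) 1)),
           Ideal.Quotient.mk Q (π (monomial (ex 1 0 1) 1)),
           Ideal.Quotient.mk Q (π (monomial (ex 0 1 1) 1)),
           Ideal.Quotient.mk Q (π (monomial (ex 1 1 1) 1))]) = ⊤ := by
      rw [eq_top_iff]
      rintro m -
      obtain ⟨g, rfl⟩ : ∃ g, Ideal.Quotient.mk Q (π g) = m := by
        obtain ⟨a, rfl⟩ := Ideal.Quotient.mk_surjective m
        obtain ⟨g, rfl⟩ := hA a
        exact ⟨g, rfl⟩
      set corr : MvPowerSeries (Fin 3) k :=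
        monomial (ex 0 0 0) (coeff (ex 0 0 0) g)
        + monomial (ex 1 0 0) (coeff (ex 1 0 0) g)
        + monomial (ex 0 1 0) (coeff (ex 0 1 0) g)
        + monomial (ex 0 0 1) (coeff (ex 0 0 1) g)
        + monomial (ex 1 1 0) (coeff (ex 1 1 0) g)
        + monomial (ex 1 0 1) (coeff (ex 1 0 1) g)
        + monomial (ex 0 1 1) (coeff (ex 0 1 1) g)
        + monomial (ex 1 1 1) (coeff (ex 1 1 1) g) with hcorr
      have hdiff : g - corr ∈ mIdeal k {ex 2 0 0, ex 0 2 0, ex 0 0 2} := by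
        apply mem_mIdeal_three
        intro d h1 h2 h3
        rw [eq_ex d] at h1 h2 h3 ⊢
        rw [ex_le_iff] at h1 h2 h3
        have hd0 : d 0 ≤ 1 := by omega
        have hd1 : d 1 ≤ 1 := by omega
        have hd2 : d 2 ≤ 1 := by omega
        rw [map_sub, hcorr]
        rw [map_add, map_add, map_add, map_add, map_add, map_add, map_add,
          coeff_monomial, coeff_monomial, coeff_monomial, coeff_monomial,
          coeff_monomial, coeff_monomial, coeff_monomial, coeff_monomial]
        rcases Nat.le_one_iff_eq_zero_or_eq_one.mp hd0 with h0' | h0' <;>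
          rcases Nat.le_one_iff_eq_zero_or_eq_one.mp hd1 with h1' | h1' <;>
          rcases Nat.le_one_iff_eq_zero_or_eq_one.mp hd2 with h2' | h2' <;>
          (rw [h0', h1', h2']; norm_num [ex_inj])
      have hIm : Ideal.Quotient.mk Q (π (g - corr)) = 0 := by
        rw [Ideal.Quotient.eq_zero_iff_mem, ← hQmap]
        exact Ideal.mem_map_of_mem π hdiff
      have hg : Ideal.Quotient.mk Q (π g) = Ideal.Quotient.mk Q (π corr) := by
        have h5 : g = corr + (g - corr) := by ring
        rw [h5, map_add, map_add, hIm, add_zero]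
      have hterm : ∀ (e : Fin 3 →₀ ℕ) (c : k), Ideal.Quotient.mk Q (π (monomial e c))
          = c • Ideal.Quotient.mk Q (π (monomial e 1)) := by
        intro e c
        have h1 : (monomial e c) = (MvPowerSeries.C (σ := Fin 3) (R := k) c) * monomial e 1 := by
          rw [← monomial_zero_eq_C_apply, monomial_mul_monomial, zero_add, mul_one]
        rw [h1, map_mul, map_mul, Algebra.smul_def]
        rfl
      have hfinal : Ideal.Quotient.mk Q (π corr) =
          (coeff (ex 0 0 0) g) • Ideal.Quotient.mk Q (π (monomial (ex 0 0 0) 1))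
          + (coeff (ex 1 0 0) g) • Ideal.Quotient.mk Q (π (monomial (ex 1 0 0) 1))
          + (coeff (ex 0 1 0) g) • Ideal.Quotient.mk Q (π (monomial (ex 0 1 0) 1))
          + (coeff (ex 0 0 1) g) • Ideal.Quotient.mk Q (π (monomial (ex 0 0 1) 1))
          + (coeff (ex 1 1 0) g) • Ideal.Quotient.mk Q (π (monomial (ex 1 1 0) 1))
          + (coeff (ex 1 0 1) g) • Ideal.Quotient.mk Q (π (monomial (ex 1 0 1) 1))
          + (coeff (ex 0 1 1) g) • Ideal.Quotient.mk Q (π (monomial (ex 0 1 1) 1))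
          + (coeff (ex 1 1 1) g) • Ideal.Quotient.mk Q (π (monomial (ex 1 1 1) 1)) := by
        rw [hcorr, map_add, map_add, map_add, map_add, map_add, map_add, map_add,
          map_add, map_add, map_add, map_add, map_add, map_add, map_add,
          hterm (ex 0 0 0) (coeff (ex 0 0 0) g), hterm (ex 1 0 0) (coeff (ex 1 0 0) g),
          hterm (ex 0 1 0) (coeff (ex 0 1 0) g), hterm (ex 0 0 1) (coeff (ex 0 0 1) g),
          hterm (ex 1 1 0) (coeff (ex 1 1 0) g), hterm (ex 1 0 1) (coeff (ex 1 0 1) g),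
          hterm (ex 0 1 1) (coeff (ex 0 1 1) g), hterm (ex 1 1 1) (coeff (ex 1 1 1) g)]
      rw [hg, hfinal]
      refine Submodule.add_mem _ (Submodule.add_mem _ (Submodule.add_mem _ (Submodule.add_mem _
        (Submodule.add_mem _ (Submodule.add_mem _ (Submodule.add_mem _ ?_ ?_) ?_) ?_) ?_) ?_)
        ?_) ?_
      exacts [Submodule.smul_mem _ _ (Submodule.subset_span ⟨0, rfl⟩),
        Submodule.smul_mem _ _ (Submodule.subset_span ⟨1, rfl⟩),
        Submodule.smul_mem _ _ (Submodule.subset_span ⟨2, rfl⟩),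
        Submodule.smul_mem _ _ (Submodule.subset_span ⟨3, rfl⟩),
        Submodule.smul_mem _ _ (Submodule.subset_span ⟨4, rfl⟩),
        Submodule.smul_mem _ _ (Submodule.subset_span ⟨5, rfl⟩),
        Submodule.smul_mem _ _ (Submodule.subset_span ⟨6, rfl⟩),
        Submodule.smul_mem _ _ (Submodule.subset_span ⟨7, rfl⟩)]
    have hub := krullDim_le_of_span' (A := A) (M := A ⧸ Q) 8 _ hspan
    show Order.krullDim (Submodule A (A ⧸ Q)) = (8 : WithBot ℕ∞)
    refine le_antisymm (le_trans hub (by norm_num)) ?_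
    exact_mod_cast hlow
end
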